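/- arXiv:1912.10141 — 7 statements merged into one kernel-verified Lean document; each statement's English description precedes it below -/
import Mathlib

section
/- Let J be a partial Steiner system S_p(k-1, k, n), let u ∈ {1,...,k} be fixed, and let z, z' ∈ ℂⁿ with ‖z‖₂ ≤ 1 and ‖z'‖₂ ≤ 1. Then ∑_{J=(j₁,...,j_k)∈J} |z_{j₁}⋯z_{j_{u-1}} z'_{j_{u+1}}⋯z'_{j_k}|² ≤ 1. -/
/-- Let `𝒥` be a partial Steiner system `S_p(k-1, k, n)` whose blocks are written as
strictly increasing tuples, let `u ∈ {1,...,k}` be fixed and let `z, z' ∈ ℂⁿ` with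
`‖z‖₂ ≤ 1`, `‖z'‖₂ ≤ 1`.  Then
`∑_{J = (j₁,...,j_k) ∈ 𝒥} |z_{j₁}⋯z_{j_{u-1}} z'_{j_{u+1}}⋯z'_{j_k}|² ≤ 1`. -/
theorem steiner_partial_product_sum_le_one (n k : ℕ) (hk : 2 ≤ k)
    (𝒥 : Finset (Fin k → Fin n))
    (hmono : ∀ J ∈ 𝒥, StrictMono J)
    (hSteiner : ∀ A : Finset (Fin n), A.card = k - 1 →
      (𝒥.filter fun J => A ⊆ Finset.image J Finset.univ).card ≤ 1)
    (u : Fin k) (z z' : Fin n → ℂ)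
    (hz : ∑ i, ‖z i‖ ^ 2 ≤ 1) (hz' : ∑ i, ‖z' i‖ ^ 2 ≤ 1) :
    ∑ J ∈ 𝒥, ‖(∏ v ∈ Finset.univ.filter (· < u), z (J v)) *
      ∏ v ∈ Finset.univ.filter (u < ·), z' (J v)‖ ^ 2 ≤ 1 := by
  classical
  set S : Finset (Fin k) := Finset.univ.filter (· ≠ u) with hS
  set w : Fin k → Fin n → ℝ := fun v i => if v < u then ‖z i‖ ^ 2 else ‖z' i‖ ^ 2 with hw
  have hznn : ∀ i, (0:ℝ) ≤ ‖z i‖ ^ 2 := fun i => sq_nonneg _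
  have hwnn : ∀ v i, 0 ≤ w v i := by
    intro v i; by_cases h : v < u <;> simp [hw, h, sq_nonneg]
  -- rewrite each summand as a product over S
  have hterm : ∀ J : Fin k → Fin n,
      ‖(∏ v ∈ Finset.univ.filter (· < u), z (J v)) *
        ∏ v ∈ Finset.univ.filter (u < ·), z' (J v)‖ ^ 2
      = ∏ v ∈ S, w v (J v) := by
    intro J
    have hunion : S = Finset.univ.filter (· < u) ∪ Finset.univ.filter (u < ·) := by
      ext v
      simp only [hS, Finset.mem_filter, Finset.mem_union, Finset.mem_univ, true_and]
      constructor
      · intro h; exact h.lt_or_gt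
      · rintro (h | h)
        · exact h.ne
        · exact h.ne'
    have hdisj : Disjoint (Finset.univ.filter (· < u)) (Finset.univ.filter (u < ·)) := by
      rw [Finset.disjoint_filter]
      intro x _ hx
      exact not_lt.mpr hx.le
    rw [hunion, Finset.prod_union hdisj, norm_mul, mul_pow, norm_prod, norm_prod,
      ← Finset.prod_pow, ← Finset.prod_pow]
    congr 1
    · refine Finset.prod_congr rfl fun v hv => ?_
      simp only [Finset.mem_filter] at hv
      simp [hw, hv.2]
    · refine Finset.prod_congr rfl fun v hv => ?_
      simp only [Finset.mem_filter] at hv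
      simp [hw, not_lt.mpr hv.2.le]
  -- the restriction map is injective on 𝒥
  have hinj : ∀ J ∈ 𝒥, ∀ J' ∈ 𝒥,
      (fun v : {v : Fin k // v ≠ u} => J v.1) = (fun v : {v : Fin k // v ≠ u} => J' v.1) →
      J = J' := by
    intro J hJ J' hJ' h
    have heq : ∀ v : Fin k, v ≠ u → J v = J' v := fun v hv => congrFun h ⟨v, hv⟩
    set A := S.image J with hA
    have hAcard : A.card = k - 1 := by
      rw [hA, Finset.card_image_of_injective _ (hmono J hJ).injective, hS,
        Finset.filter_ne', Finset.card_erase_of_mem (Finset.mem_univ u), Finset.card_univ,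
        Fintype.card_fin]
    have hA1 : A ⊆ Finset.image J Finset.univ :=
      Finset.image_subset_image (Finset.subset_univ _)
    have hA2 : A ⊆ Finset.image J' Finset.univ := by
      intro x hx
      obtain ⟨v, hv, rfl⟩ := Finset.mem_image.mp hx
      have hvne : v ≠ u := by
        simp only [hS, Finset.mem_filter] at hv; exact hv.2
      rw [heq v hvne]
      exact Finset.mem_image_of_mem _ (Finset.mem_univ v)
    exact Finset.card_le_one.mp (hSteiner A hAcard) J
      (Finset.mem_filter.mpr ⟨hJ, hA1⟩) J' (Finset.mem_filter.mpr ⟨hJ', hA2⟩)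
  -- main chain of inequalities
  calc ∑ J ∈ 𝒥, ‖(∏ v ∈ Finset.univ.filter (· < u), z (J v)) *
        ∏ v ∈ Finset.univ.filter (u < ·), z' (J v)‖ ^ 2
      = ∑ J ∈ 𝒥, ∏ v : {v : Fin k // v ≠ u}, w v.1 (J v.1) := by
        refine Finset.sum_congr rfl fun J _ => ?_
        rw [hterm J, hS]
        exact Finset.prod_subtype _ (by simp) _
    _ = ∑ f ∈ 𝒥.image (fun J => fun v : {v : Fin k // v ≠ u} => J v.1),
          ∏ v : {v : Fin k // v ≠ u}, w v.1 (f v) := by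
        rw [Finset.sum_image hinj]
    _ ≤ ∑ f : {v : Fin k // v ≠ u} → Fin n, ∏ v : {v : Fin k // v ≠ u}, w v.1 (f v) := by
        refine Finset.sum_le_sum_of_subset_of_nonneg (Finset.subset_univ _) ?_
        intro f _ _
        exact Finset.prod_nonneg fun v _ => hwnn v.1 (f v)
    _ = ∏ v : {v : Fin k // v ≠ u}, ∑ i, w v.1 i := by
        rw [← Finset.sum_prod_piFinset Finset.univ (fun v : {v : Fin k // v ≠ u} => w v.1),
          Fintype.piFinset_univ]
    _ ≤ 1 := by
        refine Finset.prod_le_one (fun v _ => Finset.sum_nonneg fun i _ => hwnn v.1 i)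
          fun v _ => ?_
        by_cases h : (v : Fin k) < u
        · simpa [hw, h] using hz
        · simpa [hw, h] using hz'
end

section
/- Let J be a partial Steiner system S_p(k-1,k,n), let (a_J)_{J∈J} be complex coefficients, and for z ∈ ℂⁿ with ‖z‖₂ ≤ 1 define Y_z(ε) = (1/k) ∑_{J∈J} ε_J a_J z_J, where (ε_J) are independent Rademacher (±1) random variables and z_J = ∏_{j∈J} z_j. Then for all z, z' in the ℓ² unit ball, the L² norm satisfies ‖Y_z − Y_{z'}‖_{L²} ≤ (max_{J∈J} |a_J|) · ‖z − z'‖_∞. -/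
/-!
Averaging over the signs kills the cross terms, so the mean square of `Y_z - Y_{z'}` is
`k⁻² ∑_J |a_J|² |z_J - z'_J|²`. Telescoping bounds `|z_J - z'_J|` by
`δ ∑_{u ∈ J} ∏_{j ∈ J ∖ {u}} m_j` with `m_j = max (|z_j|, |z'_j|)`, and Cauchy–Schwarz turns its
square into `k δ² ∑_{u ∈ J} ∏_{j ∈ J ∖ {u}} m_j²`. In a partial Steiner system the `(k-1)`-sets
`J ∖ {u}` are pairwise distinct, so the sum over `J` is at most the elementary symmetric
function `e_{k-1}(m²) ≤ (∑ m²)^{k-1} / (k-1)! ≤ 2^{k-1} / (k-1)! ≤ k`.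
-/

open Finset
open scoped Nat

def boolSign (b : Bool) : ℝ := if b then 1 else -1

lemma boolSign_mul_self (b : Bool) : boolSign b * boolSign b = 1 := by
  cases b <;> norm_num [boolSign]

lemma boolSign_not (b : Bool) : boolSign (!b) = -boolSign b := by
  cases b <;> simp [boolSign]

lemma sum_boolSign_mul_boolSign {ι : Type*} [Fintype ι] [DecidableEq ι] (i j : ι) :
    ∑ s : ι → Bool, boolSign (s i) * boolSign (s j) =
      if i = j then 2 ^ Fintype.card ι else 0 := by
  split_ifs with hij
  · subst hij
    simp [boolSign_mul_self]
  · have hflip : ∑ s : ι → Bool, boolSign (Function.update s i (!s i) i) *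
          boolSign (Function.update s i (!s i) j) =
        ∑ s : ι → Bool, boolSign (s i) * boolSign (s j) :=
      Equiv.sum_comp (Function.Involutive.toPerm (fun s : ι → Bool => Function.update s i (!s i))
        fun s => by simp) fun s => boolSign (s i) * boolSign (s j)
    simp only [Function.update_self, Function.update_of_ne (Ne.symm hij), boolSign_not, neg_mul,
      sum_neg_distrib] at hflip
    linarith

lemma sum_norm_sq_sum_boolSign_smul {ι E : Type*} [Fintype ι] [DecidableEq ι]
    [NormedAddCommGroup E] [InnerProductSpace ℝ E] (c : ι → E) :
    ∑ s : ι → Bool, ‖∑ i, boolSign (s i) • c i‖ ^ 2 = 2 ^ Fintype.card ι * ∑ i, ‖c i‖ ^ 2 := by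
  calc ∑ s : ι → Bool, ‖∑ i, boolSign (s i) • c i‖ ^ 2
      = ∑ i, ∑ j, (∑ s : ι → Bool, boolSign (s i) * boolSign (s j)) * inner ℝ (c i) (c j) := by
        simp_rw [← real_inner_self_eq_norm_sq, sum_inner, inner_sum, real_inner_smul_left,
          real_inner_smul_right, sum_mul]
        rw [sum_comm]
        refine sum_congr rfl fun i _ => ?_
        rw [sum_comm]
        simp_rw [mul_assoc]
    _ = 2 ^ Fintype.card ι * ∑ i, ‖c i‖ ^ 2 := by
        simp [sum_boolSign_mul_boolSign, ite_mul, mul_sum]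

lemma norm_prod_sub_prod_le {ι R : Type*} [DecidableEq ι] [NormedCommRing R] [NormOneClass R]
    (s : Finset ι) {f g : ι → R} {M : ι → ℝ} (hf : ∀ i ∈ s, ‖f i‖ ≤ M i)
    (hg : ∀ i ∈ s, ‖g i‖ ≤ M i) :
    ‖∏ i ∈ s, f i - ∏ i ∈ s, g i‖ ≤ ∑ u ∈ s, ‖f u - g u‖ * ∏ i ∈ s.erase u, M i := by
  induction s using Finset.induction_on with
  | empty => simp
  | @insert a s ha ih =>
    have hf' : ∀ i ∈ s, ‖f i‖ ≤ M i := fun i hi => hf i (mem_insert_of_mem hi)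
    have hg' : ∀ i ∈ s, ‖g i‖ ≤ M i := fun i hi => hg i (mem_insert_of_mem hi)
    have hga := hg a (mem_insert_self a s)
    have hsplit : ∏ i ∈ insert a s, f i - ∏ i ∈ insert a s, g i =
        (f a - g a) * ∏ i ∈ s, f i + g a * (∏ i ∈ s, f i - ∏ i ∈ s, g i) := by
      rw [prod_insert ha, prod_insert ha]; ring
    have herase : ∀ u ∈ s, ∏ i ∈ (insert a s).erase u, M i = M a * ∏ i ∈ s.erase u, M i :=
      fun u hu => by
        rw [erase_insert_of_ne (ne_of_mem_of_not_mem hu ha).symm,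
          prod_insert fun h => ha (mem_of_mem_erase h)]
    rw [hsplit, sum_insert ha, erase_insert ha,
      sum_congr rfl fun u hu => by rw [herase u hu, mul_left_comm], ← mul_sum]
    calc ‖(f a - g a) * ∏ i ∈ s, f i + g a * (∏ i ∈ s, f i - ∏ i ∈ s, g i)‖
        ≤ ‖f a - g a‖ * ∏ i ∈ s, ‖f i‖ + ‖g a‖ * ‖∏ i ∈ s, f i - ∏ i ∈ s, g i‖ := by
          refine (norm_add_le _ _).trans (add_le_add ?_ (norm_mul_le _ _))
          exact (norm_mul_le _ _).trans (by gcongr; exact norm_prod_le _ _)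
      _ ≤ _ := by
          gcongr with i hi
          · exact hf' i hi
          · exact (norm_nonneg _).trans hga
          · exact ih hf' hg'

lemma norm_prod_sub_prod_sq_le {ι R : Type*} [DecidableEq ι] [NormedCommRing R] [NormOneClass R]
    (s : Finset ι) {f g : ι → R} {δ : ℝ} (hδ : ∀ i ∈ s, ‖f i - g i‖ ≤ δ) :
    ‖∏ i ∈ s, f i - ∏ i ∈ s, g i‖ ^ 2 ≤
      δ ^ 2 * (#s * ∑ u ∈ s, ∏ i ∈ s.erase u, max ‖f i‖ ‖g i‖ ^ 2) := by
  set M : ι → ℝ := fun i => max ‖f i‖ ‖g i‖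
  have htel : ‖∏ i ∈ s, f i - ∏ i ∈ s, g i‖ ≤ δ * ∑ u ∈ s, ∏ i ∈ s.erase u, M i := by
    refine (norm_prod_sub_prod_le s (fun i _ => le_max_left _ _)
      fun i _ => le_max_right _ _).trans ?_
    rw [mul_sum]
    gcongr with u hu
    exact hδ u hu
  calc ‖∏ i ∈ s, f i - ∏ i ∈ s, g i‖ ^ 2 ≤ δ ^ 2 * (∑ u ∈ s, ∏ i ∈ s.erase u, M i) ^ 2 := by
        rw [← mul_pow]; gcongr
    _ ≤ δ ^ 2 * (#s * ∑ u ∈ s, (∏ i ∈ s.erase u, M i) ^ 2) := by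
        gcongr; exact sq_sum_le_card_mul_sum_sq
    _ = δ ^ 2 * (#s * ∑ u ∈ s, ∏ i ∈ s.erase u, M i ^ 2) := by simp_rw [prod_pow]

lemma sum_sum_erase_le_sum_powersetCard {α M : Type*} [Fintype α] [DecidableEq α]
    [AddCommMonoid M] [PartialOrder M] [IsOrderedAddMonoid M] {k : ℕ}
    {𝒥 : Finset (Finset α)} (hcard : ∀ J ∈ 𝒥, #J = k)
    (hSteiner : ∀ A : Finset α, #A = k - 1 → #(𝒥.filter fun J => A ⊆ J) ≤ 1)
    {g : Finset α → M} (hg : ∀ B, 0 ≤ g B) :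
    ∑ J ∈ 𝒥, ∑ u ∈ J, g (J.erase u) ≤ ∑ B ∈ univ.powersetCard (k - 1), g B := by
  have hcard_erase : ∀ p ∈ 𝒥.sigma fun J => J, #(p.1.erase p.2) = k - 1 := fun p hp => by
    rw [mem_sigma] at hp
    rw [card_erase_of_mem hp.2, hcard _ hp.1]
  have hinj : Set.InjOn (fun p : Σ _ : Finset α, α => p.1.erase p.2) (𝒥.sigma fun J => J) := by
    rintro ⟨J, u⟩ hp ⟨J', u'⟩ hp' (h : J.erase u = J'.erase u')
    simp only [coe_sigma, Set.mem_sigma_iff, mem_coe] at hp hp'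
    have hJ : J = J' := card_le_one.mp (hSteiner _ (hcard_erase ⟨J, u⟩ (mem_sigma.2 hp)))
      J (mem_filter.2 ⟨hp.1, erase_subset _ _⟩) J' (mem_filter.2 ⟨hp'.1, h ▸ erase_subset _ _⟩)
    subst hJ
    rw [erase_injOn J hp.2 hp'.2 h]
  rw [sum_sigma' 𝒥 (fun J => J) fun J u => g (J.erase u),
    ← sum_image (g := fun p : Σ _ : Finset α, α => p.1.erase p.2) hinj]
  refine sum_le_sum_of_subset_of_nonneg ?_ fun B _ _ => hg B
  intro B hB
  obtain ⟨p, hp, rfl⟩ := mem_image.mp hB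
  exact mem_powersetCard.mpr ⟨subset_univ _, hcard_erase p hp⟩

lemma pow_succ_add_mul_pow_le_add_pow {R : Type*} [CommSemiring R] [PartialOrder R]
    [IsOrderedRing R] {x y : R} (hx : 0 ≤ x) (hy : 0 ≤ y) (m : ℕ) :
    x ^ (m + 1) + (m + 1) * y * x ^ m ≤ (x + y) ^ (m + 1) := by
  rw [add_pow, sum_range_succ, sum_range_succ]
  simp only [Nat.choose_self, Nat.choose_succ_self_right, Nat.sub_self, pow_zero, pow_one,
    Nat.cast_one, mul_one, Nat.add_sub_cancel_left]
  have hrest : 0 ≤ ∑ i ∈ range m, x ^ i * y ^ (m + 1 - i) * ((m + 1).choose i : R) :=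
    sum_nonneg fun i _ => by positivity
  push_cast
  convert le_add_of_nonneg_left (a := x ^ m * y * (m + 1) + x ^ (m + 1)) hrest using 1 <;> ring

lemma sum_powersetCard_succ_insert_prod {α R : Type*} [DecidableEq α] [CommSemiring R]
    {a : α} {s : Finset α} (ha : a ∉ s) (m : ℕ) (w : α → R) :
    ∑ B ∈ (insert a s).powersetCard (m + 1), ∏ i ∈ B, w i =
      ∑ B ∈ s.powersetCard (m + 1), ∏ i ∈ B, w i + w a * ∑ B ∈ s.powersetCard m, ∏ i ∈ B, w i := by
  have hnot : ∀ B ∈ s.powersetCard m, a ∉ B := fun B hB h => ha ((mem_powersetCard.mp hB).1 h)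
  rw [powersetCard_succ_insert ha, sum_union, sum_image, mul_sum]
  · exact congrArg _ (sum_congr rfl fun B hB => prod_insert (hnot B hB))
  · intro B hB B' hB' h
    rw [← erase_insert (hnot B hB), ← erase_insert (hnot B' hB'), h]
  · refine disjoint_left.mpr fun B hB hB' => ?_
    obtain ⟨B', -, rfl⟩ := mem_image.mp hB'
    exact ha ((mem_powersetCard.mp hB).1 (mem_insert_self a B'))

lemma factorial_mul_sum_powersetCard_prod_le_pow {α R : Type*} [DecidableEq α] [CommSemiring R]
    [PartialOrder R] [IsOrderedRing R] (s : Finset α) {w : α → R} (hw : ∀ i ∈ s, 0 ≤ w i)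
    (m : ℕ) : m ! * ∑ B ∈ s.powersetCard m, ∏ i ∈ B, w i ≤ (∑ i ∈ s, w i) ^ m := by
  induction s using Finset.induction_on generalizing m with
  | empty =>
    cases m with
    | zero => simp
    | succ m => rw [powersetCard_eq_empty.mpr (by simp)]; simp
  | @insert a s ha ih =>
    have hw' : ∀ i ∈ s, 0 ≤ w i := fun i hi => hw i (mem_insert_of_mem hi)
    cases m with
    | zero => simp
    | succ m =>
      rw [sum_powersetCard_succ_insert_prod ha, sum_insert ha, add_comm (w a),
        Nat.factorial_succ, mul_add]
      push_cast
      calc (m + 1) * (m ! : R) * ∑ B ∈ s.powersetCard (m + 1), ∏ i ∈ B, w i +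
            (m + 1) * m ! * (w a * ∑ B ∈ s.powersetCard m, ∏ i ∈ B, w i)
          = (m + 1 : ℕ) ! * ∑ B ∈ s.powersetCard (m + 1), ∏ i ∈ B, w i +
            (m + 1) * w a * (m ! * ∑ B ∈ s.powersetCard m, ∏ i ∈ B, w i) := by
            push_cast [Nat.factorial_succ]; ring
        _ ≤ (∑ i ∈ s, w i) ^ (m + 1) + (m + 1) * w a * (∑ i ∈ s, w i) ^ m := by
            have hwa := hw a (mem_insert_self a s)
            gcongr
            · exact ih hw' (m + 1)
            · exact mul_nonneg (add_nonneg (Nat.cast_nonneg m) zero_le_one) hwa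
            · exact ih hw' m
        _ ≤ (∑ i ∈ s, w i + w a) ^ (m + 1) :=
            pow_succ_add_mul_pow_le_add_pow (sum_nonneg hw') (hw a (mem_insert_self a s)) m

lemma natCast_mul_sum_powersetCard_pred_prod_le_sq {α : Type*} [DecidableEq α] (s : Finset α)
    {w : α → ℝ} (hw : ∀ i ∈ s, 0 ≤ w i) (hsum : ∑ i ∈ s, w i ≤ 2) (k : ℕ) :
    k * ∑ B ∈ s.powersetCard (k - 1), ∏ i ∈ B, w i ≤ k ^ 2 := by
  cases k with
  | zero => simp
  | succ m =>
    have h2 : 2 ^ m ≤ (m + 1) * m ! := by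
      simpa [add_comm 1 m, Nat.factorial_succ] using
        Nat.factorial_mul_pow_le_factorial (m := 1) (n := m)
    have he : ∑ B ∈ s.powersetCard m, ∏ i ∈ B, w i ≤ m + 1 := by
      refine le_of_mul_le_mul_left ?_ (Nat.cast_pos.mpr m.factorial_pos)
      calc (m ! : ℝ) * ∑ B ∈ s.powersetCard m, ∏ i ∈ B, w i ≤ (∑ i ∈ s, w i) ^ m :=
            factorial_mul_sum_powersetCard_prod_le_pow s hw m
        _ ≤ 2 ^ m := pow_le_pow_left₀ (sum_nonneg hw) hsum m
        _ ≤ m ! * (m + 1) := by rw [mul_comm]; exact_mod_cast h2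
    push_cast [Nat.add_sub_cancel, sq]
    gcongr

lemma sum_norm_sq_mul_prod_sub_prod_le {α R : Type*} [Fintype α] [DecidableEq α]
    [NormedCommRing R] [NormOneClass R] {k : ℕ} {𝒥 : Finset (Finset α)}
    (hcard : ∀ J ∈ 𝒥, #J = k)
    (hSteiner : ∀ A : Finset α, #A = k - 1 → #(𝒥.filter fun J => A ⊆ J) ≤ 1)
    {a : Finset α → R} {A δ : ℝ} (hA : ∀ J ∈ 𝒥, ‖a J‖ ≤ A) {z z' : α → R}
    (hz : ∑ i, ‖z i‖ ^ 2 ≤ 1) (hz' : ∑ i, ‖z' i‖ ^ 2 ≤ 1) (hδ : ∀ i, ‖z i - z' i‖ ≤ δ) :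
    ∑ J ∈ 𝒥, ‖a J * (∏ j ∈ J, z j - ∏ j ∈ J, z' j)‖ ^ 2 ≤ (A * δ * k) ^ 2 := by
  set w : α → ℝ := fun i => max ‖z i‖ ‖z' i‖ ^ 2
  have hw : ∀ i ∈ univ, 0 ≤ w i := fun i _ => sq_nonneg _
  have hsum : ∑ i, w i ≤ 2 := by
    calc ∑ i, w i ≤ ∑ i, (‖z i‖ ^ 2 + ‖z' i‖ ^ 2) := by
          gcongr with i
          rcases max_choice ‖z i‖ ‖z' i‖ with h | h <;> simp only [w, h] <;> nlinarith
      _ ≤ 2 := by rw [sum_add_distrib]; linarith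
  calc ∑ J ∈ 𝒥, ‖a J * (∏ j ∈ J, z j - ∏ j ∈ J, z' j)‖ ^ 2
      ≤ ∑ J ∈ 𝒥, A ^ 2 * (δ ^ 2 * (k * ∑ u ∈ J, ∏ i ∈ J.erase u, w i)) := by
        gcongr with J hJ
        calc ‖a J * (∏ j ∈ J, z j - ∏ j ∈ J, z' j)‖ ^ 2
            ≤ ‖a J‖ ^ 2 * ‖∏ j ∈ J, z j - ∏ j ∈ J, z' j‖ ^ 2 := by
              rw [← mul_pow]; gcongr; exact norm_mul_le _ _
          _ ≤ _ := by
              gcongr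
              · exact hA J hJ
              · rw [← hcard J hJ]; exact norm_prod_sub_prod_sq_le J fun i _ => hδ i
    _ = (A * δ) ^ 2 * (k * ∑ J ∈ 𝒥, ∑ u ∈ J, ∏ i ∈ J.erase u, w i) := by
        simp only [← mul_sum]; ring
    _ ≤ (A * δ) ^ 2 * (k * ∑ B ∈ univ.powersetCard (k - 1), ∏ i ∈ B, w i) := by
        gcongr (A * δ) ^ 2 * (k * ?_)
        exact sum_sum_erase_le_sum_powersetCard (g := fun B => ∏ i ∈ B, w i) hcard hSteiner
          fun B => prod_nonneg fun i _ => hw i (mem_univ i)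
    _ ≤ (A * δ) ^ 2 * k ^ 2 := by
        gcongr; exact natCast_mul_sum_powersetCard_pred_prod_le_sq univ hw hsum k
    _ = (A * δ * k) ^ 2 := by ring

theorem rademacher_process_lipschitz_general (n k : ℕ)
    (𝒥 : Finset (Finset (Fin n)))
    (hcard : ∀ J ∈ 𝒥, J.card = k)
    (hSteiner : ∀ A : Finset (Fin n), A.card = k - 1 →
      (𝒥.filter fun J => A ⊆ J).card ≤ 1)
    (a : Finset (Fin n) → ℂ) (A δ : ℝ) (hA0 : 0 ≤ A) (hδ0 : 0 ≤ δ)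
    (hA : ∀ J ∈ 𝒥, ‖a J‖ ≤ A)
    (z z' : Fin n → ℂ)
    (hz : ∑ i, ‖z i‖ ^ 2 ≤ 1) (hz' : ∑ i, ‖z' i‖ ^ 2 ≤ 1)
    (hδ : ∀ i, ‖z i - z' i‖ ≤ δ) :
    Real.sqrt ((∑ s : {J // J ∈ 𝒥} → Bool,
        ‖((1 / (k : ℂ)) * ∑ J ∈ 𝒥.attach,
            (if s J then (1 : ℂ) else -1) * a J.1 * ∏ j ∈ J.1, z j) -
          ((1 / (k : ℂ)) * ∑ J ∈ 𝒥.attach,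
            (if s J then (1 : ℂ) else -1) * a J.1 * ∏ j ∈ J.1, z' j)‖ ^ 2) /
      2 ^ 𝒥.card) ≤ A * δ := by
  set c : {J // J ∈ 𝒥} → ℂ := fun J => a J.1 * (∏ j ∈ J.1, z j - ∏ j ∈ J.1, z' j)
  have hdiff : ∀ s : {J // J ∈ 𝒥} → Bool,
      (1 / (k : ℂ)) * ∑ J ∈ 𝒥.attach, (if s J then (1 : ℂ) else -1) * a J.1 * ∏ j ∈ J.1, z j -
        (1 / (k : ℂ)) * ∑ J ∈ 𝒥.attach, (if s J then (1 : ℂ) else -1) * a J.1 * ∏ j ∈ J.1, z' j =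
      (1 / (k : ℂ)) * ∑ J, boolSign (s J) • c J := fun s => by
    rw [← mul_sub, ← sum_sub_distrib, univ_eq_attach]
    refine congrArg _ (sum_congr rfl fun J _ => ?_)
    cases s J <;> simp [boolSign, c] <;> ring
  have hc : ∑ J, ‖c J‖ ^ 2 ≤ (A * δ * k) ^ 2 := by
    rw [univ_eq_attach, sum_attach 𝒥 fun J => ‖a J * (∏ j ∈ J, z j - ∏ j ∈ J, z' j)‖ ^ 2]
    exact sum_norm_sq_mul_prod_sub_prod_le hcard hSteiner hA hz hz' hδ
  simp_rw [hdiff, norm_mul, mul_pow, ← mul_sum, sum_norm_sq_sum_boolSign_smul, Fintype.card_coe]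
  rw [mul_left_comm, mul_div_cancel_left₀ _ (pow_ne_zero _ two_ne_zero),
    Real.sqrt_le_left (by positivity)]
  calc ‖1 / (k : ℂ)‖ ^ 2 * ∑ J, ‖c J‖ ^ 2 ≤ ‖1 / (k : ℂ)‖ ^ 2 * (A * δ * k) ^ 2 := by gcongr
    _ = (A * δ) ^ 2 * ((k : ℝ)⁻¹ * k) ^ 2 := by simp; ring
    -- `k⁻¹ * k` is `0`, not `1`, when `k = 0`
    _ ≤ (A * δ) ^ 2 :=
        mul_le_of_le_one_right (by positivity) (pow_le_one₀ (by positivity) inv_mul_le_one)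

/-- Lipschitz estimate for the Rademacher process `Y_z = (1/k) ∑_{J∈𝒥} ε_J a_J z_J`
indexed by the `ℓ²` unit ball, where `𝒥` is a partial Steiner system `S_p(k-1,k,n)`:
the `L²` norm (over the uniform probability on sign choices) of `Y_z − Y_{z'}` is at
most `(max_J |a_J|) · ‖z − z'‖_∞`. -/
theorem rademacher_process_lipschitz (n k : ℕ) (hk : 1 ≤ k)
    (𝒥 : Finset (Finset (Fin n)))
    (hcard : ∀ J ∈ 𝒥, J.card = k)
    (hSteiner : ∀ A : Finset (Fin n), A.card = k - 1 →
      (𝒥.filter fun J => A ⊆ J).card ≤ 1)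
    (a : Finset (Fin n) → ℂ) (A δ : ℝ) (hA0 : 0 ≤ A) (hδ0 : 0 ≤ δ)
    (hA : ∀ J ∈ 𝒥, ‖a J‖ ≤ A)
    (z z' : Fin n → ℂ)
    (hz : ∑ i, ‖z i‖ ^ 2 ≤ 1) (hz' : ∑ i, ‖z' i‖ ^ 2 ≤ 1)
    (hδ : ∀ i, ‖z i - z' i‖ ≤ δ) :
    Real.sqrt ((∑ s : {J // J ∈ 𝒥} → Bool,
        ‖((1 / (k : ℂ)) * ∑ J ∈ 𝒥.attach,
            (if s J then (1 : ℂ) else -1) * a J.1 * ∏ j ∈ J.1, z j) -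
          ((1 / (k : ℂ)) * ∑ J ∈ 𝒥.attach,
            (if s J then (1 : ℂ) else -1) * a J.1 * ∏ j ∈ J.1, z' j)‖ ^ 2) /
      2 ^ 𝒥.card) ≤ A * δ :=
  rademacher_process_lipschitz_general n k 𝒥 hcard hSteiner a A δ hA0 hδ0 hA z z' hz hz' hδ
end

section
/- Let T₁,...,T_n be the Dixon operators on the finite-dimensional Hilbert space H with orthonormal basis {e} ∪ {e(j₁,...,j_m) : 1 ≤ m ≤ k−2, 1 ≤ j₁ ≤ ⋯ ≤ j_m ≤ n} ∪ {f_i : 1 ≤ i ≤ n} ∪ {g}, associated to a partial Steiner system J = S_p(k−1,k,n) with signs c_J = ±1. Then for every block {i₁,...,i_k} ∈ J, T_{i₁}T_{i₂}⋯T_{i_k} e = c_{i₁,...,i_k} g, and consequently for the polynomial p(z) = ∑_{J∈J} c_J z_J one has p(T₁,...,T_n)e = |J|·g. -/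
/-- For the Dixon operators `T₁,...,Tₙ` on a Hilbert space with orthonormal family
`{e} ∪ {e(j₁,...,j_m)} ∪ {f_i} ∪ {g}` associated to a partial Steiner system
`𝒥 = S_p(k−1,k,n)` with signs `c_J = ±1`: for every block `S = {i₁ < ⋯ < i_k} ∈ 𝒥`
one has `T_{i₁}⋯T_{i_k} e = c_S g`, and consequently for `p(z) = ∑_{J∈𝒥} c_J z_J`,
`p(T₁,...,Tₙ) e = |𝒥| g`.  Nondecreasing tuples `(j₁,...,j_m)` are encoded as
multisets over `Fin n`. -/
theorem dixon_operators_eval (n k : ℕ) (hk : 3 ≤ k) (hkn : k ≤ n)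
    {H : Type*} [NormedAddCommGroup H] [InnerProductSpace ℂ H]
    (𝒥 : Finset (Finset (Fin n)))
    (hcard : ∀ S ∈ 𝒥, S.card = k)
    (hSteiner : ∀ A : Finset (Fin n), A.card = k - 1 →
      (𝒥.filter fun S => A ⊆ S).card ≤ 1)
    (c : Finset (Fin n) → ℂ) (hc : ∀ S ∈ 𝒥, c S = 1 ∨ c S = -1)
    (e g : H) (E : Multiset (Fin n) → H) (f : Fin n → H)
    (honb : Orthonormal ℂ
      (Sum.elim (fun _ : Unit => e)
        (Sum.elim
          (fun s : {s : Multiset (Fin n) // 1 ≤ Multiset.card s ∧ Multiset.card s ≤ k - 2} =>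
            E s.1)
          (Sum.elim f (fun _ : Unit => g)))))
    (T : Fin n → H →ₗ[ℂ] H)
    (hTe : ∀ l, T l e = E {l})
    (hTmid : ∀ l (s : Multiset (Fin n)), 1 ≤ Multiset.card s → Multiset.card s < k - 2 →
      T l (E s) = E (l ::ₘ s))
    (hTtop : ∀ l (s : Multiset (Fin n)), Multiset.card s = k - 2 →
      T l (E s) = ∑ i : Fin n,
        (if (i ::ₘ l ::ₘ s).toFinset ∈ 𝒥 then c ((i ::ₘ l ::ₘ s).toFinset) else 0) • f i)
    (hTf : ∀ l i, T l (f i) = if l = i then g else 0)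
    (hTg : ∀ l, T l g = 0) :
    (∀ S ∈ 𝒥, (S.sort (· ≤ ·)).foldr (fun i v => T i v) e = c S • g) ∧
      ∑ S ∈ 𝒥, c S • (S.sort (· ≤ ·)).foldr (fun i v => T i v) e = (𝒥.card : ℂ) • g := by

  have aux : ∀ L : List (Fin n), 1 ≤ L.length → L.length ≤ k - 2 →
      L.foldr (fun i v => T i v) e = E ↑L := by
    intro L
    induction L with
    | nil => intro h; simp at h
    | cons a L ih =>
      intro _ hle
      cases L with
      | nil => simpa using hTe a
      | cons b L' =>
        simp only [List.foldr_cons] at ih ⊢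
        rw [ih (by simp) (by simp at hle ⊢; omega),
            hTmid a ↑(b :: L') (by simp) (by simp at hle ⊢; omega)]
        rfl
  have main : ∀ S ∈ 𝒥, (S.sort (· ≤ ·)).foldr (fun i v => T i v) e = c S • g := by
    intro S hS
    have hcardS := hcard S hS
    have hlen : (S.sort (· ≤ ·)).length = k := by simp [hcardS]
    obtain ⟨a, b, rest, hLeq⟩ : ∃ a b rest, S.sort (· ≤ ·) = a :: b :: rest := by
      rcases h : S.sort (· ≤ ·) with _ | ⟨a, _ | ⟨b, rest⟩⟩
      · rw [h] at hlen; simp at hlen; omega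
      · rw [h] at hlen; simp at hlen; omega
      · exact ⟨a, b, rest, rfl⟩
    have hrest : rest.length = k - 2 := by
      rw [hLeq] at hlen; simp at hlen; omega
    have hms : (a ::ₘ b ::ₘ (↑rest : Multiset (Fin n))) = S.val := by
      show ((a :: b :: rest : List (Fin n)) : Multiset (Fin n)) = S.val
      rw [← hLeq, Finset.sort_eq]
    rw [hLeq, List.foldr_cons, List.foldr_cons,
        aux rest (by omega) (by omega),
        hTtop b ↑rest (by simp [hrest]), map_sum]
    simp only [map_smul, hTf, smul_ite, smul_zero]
    rw [Finset.sum_ite_eq]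
    simp only [Finset.mem_univ, if_true]
    rw [hms, Finset.val_toFinset, if_pos hS]
  refine ⟨main, ?_⟩
  have h2 : ∑ S ∈ 𝒥, c S • (S.sort (· ≤ ·)).foldr (fun i v => T i v) e = ∑ _S ∈ 𝒥, g := by
    refine Finset.sum_congr rfl fun S hS => ?_
    rw [main S hS, smul_smul]
    rcases hc S hS with h | h <;> rw [h] <;> norm_num
  rw [h2, Finset.sum_const, Nat.cast_smul_eq_nsmul]
end

section
/- Let T₁,...,T_n be the Dixon operators associated to a partial Steiner system J = S_p(k−1,k,n). Then the operators pairwise commute: T_l T_m = T_m T_l for all 1 ≤ l, m ≤ n. -/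
/-- The Dixon operators `T₁,...,Tₙ` associated to a partial Steiner system
`𝒥 = S_p(k−1,k,n)` pairwise commute: `T_l T_m = T_m T_l` for all `l, m`.
Nondecreasing tuples `(j₁,...,j_m)` indexing the basis are encoded as multisets over
`Fin n`; the spanning hypothesis says the listed vectors form a (orthonormal) basis of
the Hilbert space `H`. -/
theorem dixon_operators_commute (n k : ℕ) (hk : 3 ≤ k) (hkn : k ≤ n)
    {H : Type*} [NormedAddCommGroup H] [InnerProductSpace ℂ H]
    (𝒥 : Finset (Finset (Fin n)))
    (hcard : ∀ S ∈ 𝒥, S.card = k)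
    (hSteiner : ∀ A : Finset (Fin n), A.card = k - 1 →
      (𝒥.filter fun S => A ⊆ S).card ≤ 1)
    (c : Finset (Fin n) → ℂ) (hc : ∀ S ∈ 𝒥, c S = 1 ∨ c S = -1)
    (e g : H) (E : Multiset (Fin n) → H) (f : Fin n → H)
    (honb : Orthonormal ℂ
      (Sum.elim (fun _ : Unit => e)
        (Sum.elim
          (fun s : {s : Multiset (Fin n) // 1 ≤ Multiset.card s ∧ Multiset.card s ≤ k - 2} =>
            E s.1)
          (Sum.elim f (fun _ : Unit => g)))))
    (hspan : Submodule.span ℂ (Set.range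
      (Sum.elim (fun _ : Unit => e)
        (Sum.elim
          (fun s : {s : Multiset (Fin n) // 1 ≤ Multiset.card s ∧ Multiset.card s ≤ k - 2} =>
            E s.1)
          (Sum.elim f (fun _ : Unit => g))))) = ⊤)
    (T : Fin n → H →ₗ[ℂ] H)
    (hTe : ∀ l, T l e = E {l})
    (hTmid : ∀ l (s : Multiset (Fin n)), 1 ≤ Multiset.card s → Multiset.card s < k - 2 →
      T l (E s) = E (l ::ₘ s))
    (hTtop : ∀ l (s : Multiset (Fin n)), Multiset.card s = k - 2 →
      T l (E s) = ∑ i : Fin n,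
        (if (i ::ₘ l ::ₘ s).toFinset ∈ 𝒥 then c ((i ::ₘ l ::ₘ s).toFinset) else 0) • f i)
    (hTf : ∀ l i, T l (f i) = if l = i then g else 0)
    (hTg : ∀ l, T l g = 0) :
    ∀ l m, (T l).comp (T m) = (T m).comp (T l) := by
  intro l m
  apply LinearMap.ext_on_range hspan
  rintro (⟨⟩ | ⟨⟨s, hs1, hs2⟩ | (i | ⟨⟩)⟩) <;>
    simp only [Sum.elim_inl, Sum.elim_inr, LinearMap.comp_apply]
  · -- the vector `e`
    rw [hTe, hTe]
    have h1 : (1 : ℕ) ≤ k - 2 := by omega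
    have pair : l ::ₘ ({m} : Multiset (Fin n)) = m ::ₘ {l} := by
      rw [← Multiset.cons_zero m, Multiset.cons_swap, Multiset.cons_zero]
    rcases lt_or_eq_of_le h1 with h | h
    · rw [hTmid l {m} (by simp) (by simpa using h), hTmid m {l} (by simp) (by simpa using h),
        pair]
    · rw [hTtop l {m} (by rw [← h]; simp), hTtop m {l} (by rw [← h]; simp)]
      exact Finset.sum_congr rfl fun i _ => by rw [← pair]
  · -- the vectors `E s`
    rcases lt_or_eq_of_le hs2 with h | h
    · rw [hTmid m s hs1 h, hTmid l s hs1 h]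
      have h' : Multiset.card (m ::ₘ s) ≤ k - 2 := by simp; omega
      rcases lt_or_eq_of_le h' with h2 | h2
      · have h2' : Multiset.card (l ::ₘ s) < k - 2 := by simpa using h2
        rw [hTmid l (m ::ₘ s) (by simp) h2, hTmid m (l ::ₘ s) (by simp) h2',
          Multiset.cons_swap]
      · have h2' : Multiset.card (l ::ₘ s) = k - 2 := by simpa using h2
        rw [hTtop l (m ::ₘ s) h2, hTtop m (l ::ₘ s) h2']
        exact Finset.sum_congr rfl fun i _ => by rw [Multiset.cons_swap m l]
    · rw [hTtop m s h, hTtop l s h, map_sum, map_sum]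
      simp only [map_smul, hTf, smul_ite, smul_zero, Finset.sum_ite_eq, Finset.mem_univ,
        if_true, Multiset.cons_swap l m]
  · -- the vectors `f i`
    rw [hTf m i, hTf l i, apply_ite (T l), apply_ite (T m), hTg, hTg, map_zero, map_zero]
    simp
  · -- the vector `g`
    rw [hTg, hTg, map_zero, map_zero]
end

section
/- Suppose D_{k,2}(n) is the smallest constant C such that ‖p(T₁,...,T_n)‖ ≤ C sup_{‖z‖₂≤1} |p(z)| for every k-homogeneous polynomial p in n variables and every commuting n-tuple of operators with ‖∑ α_j T_j‖ ≤ 1 for all ‖α‖₂ = 1. If there exist (a) a Steiner unimodular polynomial p₀ with ‖p₀‖_{P(^k ℓ₂ⁿ)} ≤ A log^{3/2}(n), built on a partial Steiner system of cardinality |J| ≥ c·n^{k−1}, and (b) commuting operators S₁,...,S_n satisfying the row contractivity condition with ‖p₀(S₁,...,S_n)‖ ≥ (1+‖p₀‖)^{−k/2}|J|, then D_{k,2}(n) ≥ c' n^{k−1}/log^{(3/4)(k+2)}(n) for some constant c' > 0 independent of n. -/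
/-!
Apply the defining inequality of `D` to `p₀` and the tuple `S`: the norm of `p₀(S)` is at
least `(1 + ‖p₀‖)^{-k/2} |𝒥| ≳ n^{k-1} / (log^{3/2} n)^{k/2}`, while it is at most
`D ‖p₀‖ ≤ D A log^{3/2} n`. Dividing gives `D ≳ n^{k-1} / (log^{3/2} n)^{k/2+1}`.
-/

theorem Fin.sort_eq_filter_finRange {n : ℕ} (J : Finset (Fin n)) :
    J.sort (· ≤ ·) = (List.finRange n).filter (· ∈ J) :=
  J.sortedLT_sort.eq_of_mem_iff ((List.sortedLT_finRange n).pairwise.filter _).sortedLT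
    (by simp)

theorem List.prod_ofFn_pow_indicator {M : Type*} [Monoid M] {n : ℕ} (J : Finset (Fin n))
    (S : Fin n → M) :
    (List.ofFn fun j => S j ^ (J : Set (Fin n)).indicator 1 j).prod
      = ((J.sort (· ≤ ·)).map S).prod := by
  simp only [Set.indicator_apply, Finset.mem_coe, Pi.one_apply, pow_ite, pow_one, pow_zero]
  rw [Fin.sort_eq_filter_finRange, List.ofFn_eq_map]
  induction List.finRange n with
  | nil => rfl
  | cons a l ih => by_cases h : a ∈ J <;> simp [h, ih]

theorem Finset.prod_pow_indicator {ι M : Type*} [Fintype ι] [CommMonoid M] (J : Finset ι)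
    (z : ι → M) : ∏ j, z j ^ (J : Set ι).indicator 1 j = ∏ j ∈ J, z j := by
  classical
  simp [Set.indicator_apply, pow_ite, Finset.prod_ite_mem]

theorem Finset.sum_indicator_one {ι : Type*} [Fintype ι] (J : Finset ι) :
    ∑ j, (J : Set ι).indicator (1 : ι → ℕ) j = J.card := by
  classical
  simp [Set.indicator_apply]

theorem Finset.sum_sum_ite_eq_smul {κ β R M : Type*} [DecidableEq β] [Semiring R]
    [AddCommMonoid M] [Module R M] (s : Finset κ) (T : Finset β) (e : κ → β)
    (hs : ∀ x ∈ s, e x ∈ T) (c : κ → R) (f : β → M) :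
    ∑ α ∈ T, (∑ x ∈ s, if α = e x then c x else 0) • f α = ∑ x ∈ s, c x • f (e x) := by
  simp_rw [Finset.sum_smul, ite_smul, zero_smul]
  rw [Finset.sum_comm]
  exact Finset.sum_congr rfl fun x hx => by rw [Finset.sum_ite_eq', if_pos (hs x hx)]

def IsRowContraction {ι E : Type*} [Fintype ι] [SeminormedAddCommGroup E] [NormedSpace ℂ E]
    (S : ι → E) : Prop :=
  ∀ α : ι → ℂ, ∑ j, ‖α j‖ ^ 2 = 1 → ‖∑ j, α j • S j‖ ≤ 1

/-- `D_{k,2}(n)` is the least `D` with `IsVonNeumannConstant H n k D`. -/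
def IsVonNeumannConstant (H : Type*) [NormedAddCommGroup H] [InnerProductSpace ℂ H]
    (n k : ℕ) (D : ℝ) : Prop :=
  ∀ (a : (Fin n → ℕ) → ℂ) (S : Fin n → H →L[ℂ] H),
    (∀ i j, S i * S j = S j * S i) → IsRowContraction S →
    ∀ N : ℝ,
      (∀ z : Fin n → ℂ, ∑ j, ‖z j‖ ^ 2 ≤ 1 →
        ‖∑ α ∈ Finset.Nat.antidiagonalTuple n k, a α * ∏ j, z j ^ α j‖ ≤ N) →
      ‖∑ α ∈ Finset.Nat.antidiagonalTuple n k,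
          a α • (List.ofFn fun j => S j ^ α j).prod‖ ≤ D * N

theorem IsVonNeumannConstant.norm_sum_smul_prod_sort_le {H : Type*} [NormedAddCommGroup H]
    [InnerProductSpace ℂ H] {n k : ℕ} {D : ℝ} (hD : IsVonNeumannConstant H n k D)
    {𝒥 : Finset (Finset (Fin n))} (h𝒥 : ∀ J ∈ 𝒥, J.card = k) (cJ : Finset (Fin n) → ℂ)
    {S : Fin n → H →L[ℂ] H} (hcomm : ∀ i j, S i * S j = S j * S i) (hS : IsRowContraction S)
    {N : ℝ} (hN : ∀ z : Fin n → ℂ, ∑ j, ‖z j‖ ^ 2 ≤ 1 → ‖∑ J ∈ 𝒥, cJ J * ∏ j ∈ J, z j‖ ≤ N) :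
    ‖∑ J ∈ 𝒥, cJ J • ((J.sort (· ≤ ·)).map S).prod‖ ≤ D * N := by
  set e : Finset (Fin n) → Fin n → ℕ := fun J => (J : Set (Fin n)).indicator 1
  have he : ∀ J ∈ 𝒥, e J ∈ Finset.Nat.antidiagonalTuple n k := fun J hJ => by
    rw [Finset.Nat.mem_antidiagonalTuple, Finset.sum_indicator_one, h𝒥 J hJ]
  have hpoly := hD (fun α => ∑ J ∈ 𝒥, if α = e J then cJ J else 0) S hcomm hS N fun z hz => by
    simp_rw [← smul_eq_mul (a := ∑ J ∈ 𝒥, _)]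
    rw [Finset.sum_sum_ite_eq_smul 𝒥 _ e he]
    simpa only [smul_eq_mul, e, Finset.prod_pow_indicator] using hN z hz
  rw [Finset.sum_sum_ite_eq_smul 𝒥 _ e he] at hpoly
  simpa only [e, List.prod_ofFn_pow_indicator] using hpoly

theorem Real.one_le_log_natCast {n : ℕ} (hn : 3 ≤ n) : 1 ≤ Real.log n := by
  rw [Real.le_log_iff_exp_le (by positivity)]
  calc Real.exp 1 ≤ 3 := Real.exp_one_lt_d9.le.trans (by norm_num)
    _ ≤ n := by exact_mod_cast hn

theorem Real.rpow_three_fourths_mul_add_two {L : ℝ} (hL : 0 < L) (k : ℝ) :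
    L ^ ((3 : ℝ) / 4 * (k + 2)) = (L ^ ((3 : ℝ) / 2)) ^ (k / 2) * L ^ ((3 : ℝ) / 2) := by
  rw [← Real.rpow_mul hL.le, ← Real.rpow_add hL]
  ring_nf

theorem le_of_rpow_neg_half_mul_le {A c k P t x m D : ℝ} (hA : 0 < A) (hk : 0 ≤ k) (ht : 1 ≤ t)
    (hP : 0 ≤ P) (hPt : P ≤ A * t) (hm : 0 ≤ m) (hcm : c * x ≤ m)
    (hD : (1 + P) ^ (-k / 2) * m ≤ D * (A * t)) :
    c * (1 + A) ^ (-k / 2) / A * x / (t ^ (k / 2) * t) ≤ D := by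
  have ht0 : 0 < t := one_pos.trans_le ht
  have hbase : ((1 + A) * t) ^ (-k / 2) ≤ (1 + P) ^ (-k / 2) :=
    Real.rpow_le_rpow_of_nonpos (by positivity) (by nlinarith) (by linarith)
  have hsplit : ((1 + A) * t) ^ (-k / 2) = (1 + A) ^ (-k / 2) / t ^ (k / 2) := by
    rw [Real.mul_rpow (by linarith) ht0.le, neg_div, Real.rpow_neg ht0.le, ← div_eq_mul_inv]
  calc c * (1 + A) ^ (-k / 2) / A * x / (t ^ (k / 2) * t)
      = c * x * ((1 + A) * t) ^ (-k / 2) / (A * t) := by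
        rw [hsplit]
        field_simp
    _ ≤ m * (1 + P) ^ (-k / 2) / (A * t) := by
        gcongr ?_ / _
        exact mul_le_mul hcm hbase (by positivity) hm
    _ ≤ D := by rwa [mul_comm, div_le_iff₀ (by positivity)]

theorem D_k2_lower_bound_general (k : ℕ) (A c : ℝ) (hA : 0 < A) (hc : 0 < c)
    {H : Type*} [NormedAddCommGroup H] [InnerProductSpace ℂ H] :
    ∃ c' > 0, ∀ n : ℕ, 3 ≤ n → ∀ D : ℝ,
      (∀ (a : (Fin n → ℕ) → ℂ) (S : Fin n → H →L[ℂ] H),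
        (∀ i j, S i * S j = S j * S i) →
        (∀ α : Fin n → ℂ, ∑ j, ‖α j‖ ^ 2 = 1 → ‖∑ j, α j • S j‖ ≤ 1) →
        ∀ N : ℝ,
          (∀ z : Fin n → ℂ, ∑ j, ‖z j‖ ^ 2 ≤ 1 →
            ‖∑ α ∈ Finset.Nat.antidiagonalTuple n k, a α * ∏ j, z j ^ α j‖ ≤ N) →
          ‖∑ α ∈ Finset.Nat.antidiagonalTuple n k,
              a α • (List.ofFn fun j => S j ^ α j).prod‖ ≤ D * N) →
      ∀ (𝒥 : Finset (Finset (Fin n))) (cJ : Finset (Fin n) → ℂ) (P₀ : ℝ)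
        (S : Fin n → H →L[ℂ] H),
        (∀ J ∈ 𝒥, J.card = k) →
        (∀ B : Finset (Fin n), B.card = k - 1 →
          (𝒥.filter fun J => B ⊆ J).card ≤ 1) →
        (∀ J ∈ 𝒥, cJ J = 1 ∨ cJ J = -1) →
        IsLUB {r : ℝ | ∃ z : Fin n → ℂ,
          (∑ i, ‖z i‖ ^ 2 ≤ 1) ∧ r = ‖∑ J ∈ 𝒥, cJ J * ∏ j ∈ J, z j‖} P₀ →
        P₀ ≤ A * Real.log n ^ ((3 : ℝ) / 2) →
        c * (n : ℝ) ^ (k - 1) ≤ 𝒥.card →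
        (∀ i j, S i * S j = S j * S i) →
        (∀ α : Fin n → ℂ, ∑ j, ‖α j‖ ^ 2 = 1 → ‖∑ j, α j • S j‖ ≤ 1) →
        (1 + P₀) ^ (-(k : ℝ) / 2) * (𝒥.card : ℝ) ≤
          ‖∑ J ∈ 𝒥, cJ J • ((J.sort (· ≤ ·)).map S).prod‖ →
        c' * (n : ℝ) ^ (k - 1) / Real.log n ^ ((3 : ℝ) / 4 * (k + 2)) ≤ D := by
  refine ⟨c * (1 + A) ^ (-(k : ℝ) / 2) / A, by positivity, ?_⟩
  intro n hn D hD 𝒥 cJ P₀ S h𝒥 _ _ hP₀ hP₀A hcard hcomm hS hlower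
  have hlog : 1 ≤ Real.log n := Real.one_le_log_natCast hn
  have hP₀_nonneg : 0 ≤ P₀ := (norm_nonneg _).trans (hP₀.1 ⟨0, by simp, rfl⟩)
  have hupper : ‖∑ J ∈ 𝒥, cJ J • ((J.sort (· ≤ ·)).map S).prod‖
      ≤ D * (A * Real.log n ^ ((3 : ℝ) / 2)) :=
    IsVonNeumannConstant.norm_sum_smul_prod_sort_le hD h𝒥 cJ hcomm hS fun z hz =>
      (hP₀.1 ⟨z, hz, rfl⟩).trans hP₀A
  rw [Real.rpow_three_fourths_mul_add_two (one_pos.trans_le hlog)]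
  exact le_of_rpow_neg_half_mul_le hA k.cast_nonneg (Real.one_le_rpow hlog (by norm_num))
    hP₀_nonneg hP₀A (Nat.cast_nonneg _) hcard (hlower.trans hupper)

/-- Lower bound for `D_{k,2}(n)`.  Suppose `D` satisfies the von Neumann-type inequality
`‖p(T₁,...,Tₙ)‖ ≤ D · sup_{‖z‖₂≤1}|p(z)|` for every `k`-homogeneous polynomial `p` in `n`
variables and every commuting `n`-tuple of operators with `‖∑ αⱼ Tⱼ‖ ≤ 1` whenever
`‖α‖₂ = 1` (in particular the smallest such constant does).  If there exist
(a) a Steiner unimodular polynomial `p₀` with `‖p₀‖_{P(^k ℓ₂ⁿ)} ≤ A log^{3/2} n`, built on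
a partial Steiner system of cardinality `|𝒥| ≥ c·n^{k−1}`, and
(b) commuting operators `S₁,...,Sₙ` satisfying the row contractivity condition with
`‖p₀(S₁,...,Sₙ)‖ ≥ (1+‖p₀‖)^{−k/2}|𝒥|`,
then `D ≥ c'· n^{k−1}/log^{(3/4)(k+2)} n` for some `c' > 0` independent of `n`. -/
theorem D_k2_lower_bound (k : ℕ) (hk : 3 ≤ k) (A c : ℝ) (hA : 0 < A) (hc : 0 < c)
    {H : Type*} [NormedAddCommGroup H] [InnerProductSpace ℂ H] :
    ∃ c' > 0, ∀ n : ℕ, 3 ≤ n → ∀ D : ℝ,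
      (∀ (a : (Fin n → ℕ) → ℂ) (S : Fin n → H →L[ℂ] H),
        (∀ i j, S i * S j = S j * S i) →
        (∀ α : Fin n → ℂ, ∑ j, ‖α j‖ ^ 2 = 1 → ‖∑ j, α j • S j‖ ≤ 1) →
        ∀ N : ℝ,
          (∀ z : Fin n → ℂ, ∑ j, ‖z j‖ ^ 2 ≤ 1 →
            ‖∑ α ∈ Finset.Nat.antidiagonalTuple n k, a α * ∏ j, z j ^ α j‖ ≤ N) →
          ‖∑ α ∈ Finset.Nat.antidiagonalTuple n k,
              a α • (List.ofFn fun j => S j ^ α j).prod‖ ≤ D * N) →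
      ∀ (𝒥 : Finset (Finset (Fin n))) (cJ : Finset (Fin n) → ℂ) (P₀ : ℝ)
        (S : Fin n → H →L[ℂ] H),
        (∀ J ∈ 𝒥, J.card = k) →
        (∀ B : Finset (Fin n), B.card = k - 1 →
          (𝒥.filter fun J => B ⊆ J).card ≤ 1) →
        (∀ J ∈ 𝒥, cJ J = 1 ∨ cJ J = -1) →
        IsLUB {r : ℝ | ∃ z : Fin n → ℂ,
          (∑ i, ‖z i‖ ^ 2 ≤ 1) ∧ r = ‖∑ J ∈ 𝒥, cJ J * ∏ j ∈ J, z j‖} P₀ →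
        P₀ ≤ A * Real.log n ^ ((3 : ℝ) / 2) →
        c * (n : ℝ) ^ (k - 1) ≤ 𝒥.card →
        (∀ i j, S i * S j = S j * S i) →
        (∀ α : Fin n → ℂ, ∑ j, ‖α j‖ ^ 2 = 1 → ‖∑ j, α j • S j‖ ≤ 1) →
        (1 + P₀) ^ (-(k : ℝ) / 2) * (𝒥.card : ℝ) ≤
          ‖∑ J ∈ 𝒥, cJ J • ((J.sort (· ≤ ·)).map S).prod‖ →
        c' * (n : ℝ) ^ (k - 1) / Real.log n ^ ((3 : ℝ) / 4 * (k + 2)) ≤ D :=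
  D_k2_lower_bound_general k A c hA hc
end

section
/- Let k ≥ 2 and q ≥ 2, and let p be a k-homogeneous polynomial in n complex variables with associated symmetric k-linear form L. Assume ‖L‖ on (ℓ₂ⁿ)^k equals B₂ and ‖L‖ on (ℓ_∞ⁿ)^k equals B_∞. Then the supremum of |p| on the ℓ_q unit ball satisfies ‖p‖_{P(^k ℓ_qⁿ)} ≤ B₂^{2/q} · B_∞^{(q−2)/q}. -/
open Complex HadamardThreeLines

/-!
Put `z_i = e^{iθ_i} |z_i|` and `f(s) = L(z(s), …, z(s))` with `z_i(s) = e^{iθ_i} |z_i|^{qs/2}`.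
Then `f` is entire, `f(2/q) = L(z, …, z)`, on `Re s = 0` (indeed on all of `Re s ≥ 0`) the vector
`z(s)` lies in the `ℓ_∞` unit ball, and on `Re s = 1` in the `ℓ₂` unit ball because
`∑ |z_i|^q ≤ 1`. Hadamard's three lines theorem gives `|f(2/q)| ≤ B∞^{1-2/q} B₂^{2/q}`.
-/

theorem MultilinearMap.apply_eq_sum_prod_smul_single {R ι κ M : Type*} [CommSemiring R]
    [AddCommMonoid M] [Module R M] [Fintype ι] [DecidableEq ι] [Fintype κ] [DecidableEq κ]
    (L : MultilinearMap R (fun _ : κ => ι → R) M) (v : κ → ι → R) :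
    L v = ∑ r : κ → ι, (∏ j, v j (r j)) • L (fun j => Pi.single (r j) 1) := by
  conv_lhs => rw [funext fun j => pi_eq_sum_univ' (v j), L.map_sum]
  simp only [L.map_smul_univ]

theorem MultilinearMap.differentiable_comp {𝕜 E F ι κ : Type*} [NontriviallyNormedField 𝕜]
    [NormedAddCommGroup E] [NormedSpace 𝕜 E] [NormedAddCommGroup F] [NormedSpace 𝕜 F]
    [Fintype ι] [DecidableEq ι] [Fintype κ] [DecidableEq κ]
    (L : MultilinearMap 𝕜 (fun _ : κ => ι → 𝕜) F) {g : E → κ → ι → 𝕜}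
    (hg : ∀ j i, Differentiable 𝕜 fun x => g x j i) : Differentiable 𝕜 fun x => L (g x) := by
  rw [funext fun x => L.apply_eq_sum_prod_smul_single (g x)]
  fun_prop

noncomputable def phaseCpow (w s : ℂ) : ℂ := if w = 0 then 0 else w / ‖w‖ * (‖w‖ : ℂ) ^ s

theorem phaseCpow_one (w : ℂ) : phaseCpow w 1 = w := by
  rcases eq_or_ne w 0 with rfl | hw
  · simp [phaseCpow]
  · simp [phaseCpow, hw]

theorem norm_phaseCpow_le (w s : ℂ) : ‖phaseCpow w s‖ ≤ ‖w‖ ^ s.re := by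
  rcases eq_or_ne w 0 with rfl | hw
  · simp only [phaseCpow, ↓reduceIte, norm_zero]
    positivity
  · simp [phaseCpow, hw, norm_cpow_eq_rpow_re_of_pos (norm_pos_iff.2 hw)]

theorem differentiable_phaseCpow (w : ℂ) : Differentiable ℂ (phaseCpow w) := by
  rcases eq_or_ne w 0 with rfl | hw
  · rw [show phaseCpow 0 = fun _ => 0 from funext fun _ => if_pos rfl]
    exact differentiable_const 0
  · rw [show phaseCpow w = fun s => w / ‖w‖ * (‖w‖ : ℂ) ^ s from funext fun _ => if_neg hw]
    exact (differentiable_id.const_cpow (.inl (by simpa using hw))).const_mul _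

theorem sq_norm_phaseCpow_le {w s : ℂ} {q : ℝ} (hs : s.re = q / 2) :
    ‖phaseCpow w s‖ ^ 2 ≤ ‖w‖ ^ q := by
  calc ‖phaseCpow w s‖ ^ 2 ≤ (‖w‖ ^ (q / 2)) ^ 2 :=
        pow_le_pow_left₀ (norm_nonneg _) (hs ▸ norm_phaseCpow_le w s) 2
    _ = ‖w‖ ^ q := by
        rw [← Real.rpow_natCast, ← Real.rpow_mul (norm_nonneg w)]
        norm_num

theorem norm_le_one_of_sum_rpow_norm_le_one {ι E : Type*} [Fintype ι] [SeminormedAddCommGroup E]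
    {z : ι → E} {q : ℝ} (hq : 0 < q) (hz : ∑ i, ‖z i‖ ^ q ≤ 1) (i : ι) : ‖z i‖ ≤ 1 :=
  le_of_not_gt fun h => (Real.one_lt_rpow h hq).not_ge <|
    (Finset.single_le_sum (fun j _ => by positivity) (Finset.mem_univ i)).trans hz

theorem interpolation_polynomial_bound_general (n k : ℕ) (q : ℝ) (hq : 2 ≤ q)
    (L : MultilinearMap ℂ (fun _ : Fin k => Fin n → ℂ) ℂ)
    (B2 Binf : ℝ)
    (hB2 : IsLUB {r : ℝ | ∃ v : Fin k → Fin n → ℂ,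
      (∀ j, ∑ i, ‖v j i‖ ^ 2 ≤ 1) ∧ r = ‖L v‖} B2)
    (hBinf : IsLUB {r : ℝ | ∃ v : Fin k → Fin n → ℂ,
      (∀ j, ∀ i, ‖v j i‖ ≤ 1) ∧ r = ‖L v‖} Binf)
    (z : Fin n → ℂ) (hz : ∑ i, ‖z i‖ ^ q ≤ 1) :
    ‖L (fun _ => z)‖ ≤ B2 ^ (2 / q) * Binf ^ ((q - 2) / q) := by
  have hq0 : 0 < q := by linarith
  set f : ℂ → ℂ := fun s => L fun _ i => phaseCpow (z i) (q * s / 2)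
  have hre (s : ℂ) : (q * s / 2).re = q * s.re / 2 := by simp
  have hdiff : Differentiable ℂ f :=
    L.differentiable_comp fun _ i => (differentiable_phaseCpow _).comp (by fun_prop)
  have hBinf_bound (s : ℂ) (hs : 0 ≤ s.re) : ‖f s‖ ≤ Binf :=
    hBinf.1 ⟨_, fun _ i => (norm_phaseCpow_le _ _).trans <| Real.rpow_le_one (norm_nonneg _)
      (norm_le_one_of_sum_rpow_norm_le_one hq0 hz i) (by rw [hre]; positivity), rfl⟩
  have hB2_bound (s : ℂ) (hs : s.re = 1) : ‖f s‖ ≤ B2 :=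
    hB2.1 ⟨_, fun _ => (Finset.sum_le_sum fun i _ =>
      sq_norm_phaseCpow_le (by rw [hre, hs, mul_one])).trans hz, rfl⟩
  have hf : f (2 / q : ℝ) = L fun _ => z := by
    have : (q : ℂ) * (2 / q : ℝ) / 2 = 1 := by
      push_cast
      field_simp [ofReal_ne_zero.2 hq0.ne']
    simp only [f, this, phaseCpow_one]
  have hmem : ((2 / q : ℝ) : ℂ) ∈ verticalClosedStrip 0 1 := by
    simp only [verticalClosedStrip, ofReal_re, Set.mem_preimage, Set.mem_Icc]
    exact ⟨by positivity, (div_le_one hq0).2 hq⟩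
  have hthree := norm_le_interp_of_mem_verticalClosedStrip₀₁' f hmem hdiff.diffContOnCl
    ⟨Binf, Set.forall_mem_image.2 fun s hs => hBinf_bound s hs.1⟩
    (fun s hs => hBinf_bound s (Set.mem_singleton_iff.1 hs).ge) hB2_bound
  rw [hf, ofReal_re, show 1 - 2 / q = (q - 2) / q by field_simp] at hthree
  rwa [mul_comm]

/-- Complex interpolation step: let `k ≥ 2`, `q ≥ 2`, and let `p` be a `k`-homogeneous
polynomial in `n` complex variables with associated symmetric `k`-linear form `L`,
`p(z) = L(z,...,z)`.  If `‖L‖` on `(ℓ₂ⁿ)^k` equals `B₂` and `‖L‖` on `(ℓ∞ⁿ)^k` equals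
`B∞`, then the supremum of `|p|` on the `ℓ_q` unit ball satisfies
`‖p‖_{P(^k ℓ_qⁿ)} ≤ B₂^{2/q} B∞^{(q−2)/q}`. -/
theorem interpolation_polynomial_bound (n k : ℕ) (hk : 2 ≤ k) (q : ℝ) (hq : 2 ≤ q)
    (L : MultilinearMap ℂ (fun _ : Fin k => Fin n → ℂ) ℂ)
    (hsym : ∀ (σ : Equiv.Perm (Fin k)) (v : Fin k → Fin n → ℂ), L (v ∘ σ) = L v)
    (B2 Binf : ℝ)
    (hB2 : IsLUB {r : ℝ | ∃ v : Fin k → Fin n → ℂ,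
      (∀ j, ∑ i, ‖v j i‖ ^ 2 ≤ 1) ∧ r = ‖L v‖} B2)
    (hBinf : IsLUB {r : ℝ | ∃ v : Fin k → Fin n → ℂ,
      (∀ j, ∀ i, ‖v j i‖ ≤ 1) ∧ r = ‖L v‖} Binf)
    (z : Fin n → ℂ) (hz : ∑ i, ‖z i‖ ^ q ≤ 1) :
    ‖L (fun _ => z)‖ ≤ B2 ^ (2 / q) * Binf ^ ((q - 2) / q) :=
  interpolation_polynomial_bound_general n k q hq L B2 Binf hB2 hBinf z hz
end

section
/- For a metric space (X,d) with finite diameter and the Young function ψ₂(t) = e^{t²} − 1, if X = B_{ℓ₂ⁿ} (unit ball of ℂⁿ with Euclidean norm) equipped with the metric d(z,z') = ‖z−z'‖_∞, then the entropy integral J_{ψ₂}(X,d) = ∫₀^{diam X} ψ₂^{−1}(N(X,d;ε)) dε satisfies J_{ψ₂}(B_{ℓ₂ⁿ}, ‖·‖_∞) ≤ C log^{3/2}(n) for some constant C > 0 independent of n ≥ 2. -/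
open MeasureTheory

/-- The unit ball of `ℓ₂ⁿ` over `ℂ`. -/
def l2Ball (n : ℕ) : Set (Fin n → ℂ) := {z | ∑ i, ‖z i‖ ^ 2 ≤ 1}

/-- The `ℓ∞` distance on `ℂⁿ`. -/
noncomputable def dInfty {n : ℕ} (z z' : Fin n → ℂ) : ℝ := ⨆ i, ‖z i - z' i‖

/-- `N(B_{ℓ₂ⁿ}, ‖·‖_∞; ε)`: the smallest number of open `ℓ∞`-balls of radius `ε`
(centered in the ball) needed to cover the `ℓ₂` unit ball. -/
noncomputable def covNum (n : ℕ) (ε : ℝ) : ℕ :=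
  sInf {m : ℕ | ∃ s : Finset (Fin n → ℂ), ↑s ⊆ l2Ball n ∧ s.card = m ∧
    ∀ z ∈ l2Ball n, ∃ w ∈ s, dInfty z w < ε}

/-- The diameter of the `ℓ₂` unit ball in the `ℓ∞` metric. -/
noncomputable def diamInfty (n : ℕ) : ℝ :=
  sSup {r : ℝ | ∃ z ∈ l2Ball n, ∃ z' ∈ l2Ball n, r = dInfty z z'}

/-!
A point of the unit ball of `ℓ₂ⁿ` has at most `t⁻²` coordinates of modulus above `t`. Zeroing the
coordinates of modulus at most `2ε/5` and rounding the others to a grid of mesh `ε/5` thus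
approximates it within `2ε/5` in `ℓ∞` by a vector with at most `min(n, 7/ε²)` nonzero coordinates,
each taken from `O(ε⁻²)` grid values, whence `log N(ε) ≲ min(n, ε⁻²) · log(n/ε²)`.
Splitting the entropy integral at `ε = n^{-1/2}`, the lower range contributes `O(√(log n))` and the
upper range `∫ √(log n) / ε dε = O(log^{3/2} n)`.
-/

open Finset Real

section SparseVectors

variable {ι α : Type*} [Fintype ι] [Zero α]

open Classical in
noncomputable def sparseVectors (G : Finset α) (k : ℕ) : Finset (ι → α) :=
  {w ∈ Fintype.piFinset fun _ => G | #{i | w i ≠ 0} ≤ k}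

lemma Finset.exists_subset_range_of_card_le {β : Type*} [Nonempty β] {S : Finset β} {k : ℕ}
    (h : #S ≤ k) : ∃ σ : Fin k → β, ↑S ⊆ Set.range σ := by
  classical
  refine ⟨fun j => if hj : (j : ℕ) < #S then S.equivFin.symm ⟨j, hj⟩ else Classical.arbitrary β,
    fun b hb => ⟨Fin.castLE h (S.equivFin ⟨b, hb⟩), by simp⟩⟩

lemma card_sparseVectors_le [Nonempty ι] (G : Finset α) (k : ℕ) :
    #(sparseVectors G k : Finset (ι → α)) ≤ (Fintype.card ι * #G) ^ k := by
  classical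
  -- a sparse vector is recovered from `k` (position, value) pairs listing its support
  let decode : (Fin k → ι × α) → ι → α := fun p i =>
    if h : ∃ j, (p j).1 = i then (p h.choose).2 else 0
  calc #(sparseVectors G k : Finset (ι → α))
      ≤ #((Fintype.piFinset fun _ : Fin k => univ ×ˢ G).image decode) := by
        refine card_le_card fun w hw => ?_
        simp only [sparseVectors, mem_filter, Fintype.mem_piFinset] at hw
        obtain ⟨σ, hσ⟩ := exists_subset_range_of_card_le hw.2
        refine mem_image.2 ⟨fun j => (σ j, w (σ j)), ?_, funext fun i => ?_⟩
        · simpa [Fintype.mem_piFinset] using fun j => hw.1 (σ j)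
        · by_cases h : ∃ j, σ j = i
          · simp only [decode, dif_pos h, h.choose_spec]
          · simp only [decode, dif_neg h]
            by_contra hwi
            exact h (hσ (by simpa using Ne.symm hwi))
    _ ≤ #(Fintype.piFinset fun _ : Fin k => (univ : Finset ι) ×ˢ G) := card_image_le
    _ = (Fintype.card ι * #G) ^ k := by simp [card_product]

end SparseVectors

section SupDistance

variable {n : ℕ}

lemma dInfty_eq_dist (z z' : Fin n → ℂ) : dInfty z z' = dist z z' := by
  refine le_antisymm (Real.iSup_le (fun i => ?_) dist_nonneg)
    ((dist_pi_le_iff (Real.iSup_nonneg fun i => norm_nonneg (z i - z' i))).2 fun i => ?_)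
  · rw [← dist_eq_norm]
    exact dist_le_pi_dist z z' i
  · rw [dist_eq_norm]
    exact le_ciSup (Set.finite_range fun i => ‖z i - z' i‖).bddAbove i

lemma norm_le_one_of_mem_l2Ball {z : Fin n → ℂ} (hz : z ∈ l2Ball n) (i : Fin n) : ‖z i‖ ≤ 1 := by
  have hi : ‖z i‖ ^ 2 ≤ 1 :=
    (single_le_sum (f := fun j => ‖z j‖ ^ 2) (fun j _ => by positivity) (mem_univ i)).trans hz
  nlinarith [norm_nonneg (z i)]

lemma card_lt_norm_mul_sq_le {z : Fin n → ℂ} (hz : z ∈ l2Ball n) {t : ℝ} (ht : 0 ≤ t) :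
    (#{i | t < ‖z i‖} : ℝ) * t ^ 2 ≤ 1 := by
  calc (#{i | t < ‖z i‖} : ℝ) * t ^ 2 ≤ ∑ i ∈ {i | t < ‖z i‖}, ‖z i‖ ^ 2 := by
        rw [← nsmul_eq_mul]
        exact card_nsmul_le_sum _ _ _ fun i hi => pow_le_pow_left₀ ht (mem_filter.1 hi).2.le 2
    _ ≤ ∑ i, ‖z i‖ ^ 2 := sum_le_sum_of_subset_of_nonneg (subset_univ _) fun _ _ _ => by positivity
    _ ≤ 1 := hz

lemma dist_le_two_of_mem_l2Ball {z z' : Fin n → ℂ} (hz : z ∈ l2Ball n) (hz' : z' ∈ l2Ball n) :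
    dist z z' ≤ 2 :=
  (dist_pi_le_iff zero_le_two).2 fun i => (dist_le_norm_add_norm _ _).trans <| by
    linarith [norm_le_one_of_mem_l2Ball hz i, norm_le_one_of_mem_l2Ball hz' i]

lemma diamInfty_eq_two (hn : 0 < n) : diamInfty n = 2 := by
  set e : Fin n → ℂ := Pi.single ⟨0, hn⟩ 1
  have he : e ∈ l2Ball n := by
    simp [l2Ball, e, Pi.single_apply, apply_ite (fun x : ℂ => ‖x‖ ^ 2)]
  have hne : -e ∈ l2Ball n := by simpa [l2Ball] using he
  have hdist : dist e (-e) = 2 := by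
    refine le_antisymm (dist_le_two_of_mem_l2Ball he hne) ?_
    calc (2 : ℝ) = dist (e ⟨0, hn⟩) (-e ⟨0, hn⟩) := by norm_num [e, dist_eq_norm]
      _ ≤ dist e (-e) := dist_le_pi_dist e (-e) _
  simp only [diamInfty, dInfty_eq_dist]
  refine le_antisymm (csSup_le ⟨_, e, he, -e, hne, rfl⟩ ?_)
    (le_csSup ⟨2, ?_⟩ ⟨e, he, -e, hne, hdist.symm⟩)
  all_goals rintro r ⟨z, hz, z', hz', rfl⟩; exact dist_le_two_of_mem_l2Ball hz hz'

lemma covNum_le_card {ε r : ℝ} (t : Finset (Fin n → ℂ)) (hr : 2 * r < ε)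
    (ht : ∀ z ∈ l2Ball n, ∃ w ∈ t, dist z w ≤ r) : covNum n ε ≤ #t := by
  classical
  -- centers outside the ball are moved into it, at the cost of doubling `r`
  have recenter : ∀ w : Fin n → ℂ, ∃ x ∈ l2Ball n, ∀ z ∈ l2Ball n, dist z w ≤ r → dist z x < ε := by
    intro w
    by_cases h : ∃ x ∈ l2Ball n, dist x w ≤ r
    · obtain ⟨x, hx, hxw⟩ := h
      refine ⟨x, hx, fun z _ hzw => ?_⟩
      linarith [dist_triangle_right z x w]
    · exact ⟨0, by simp [l2Ball], fun z hz hzw => absurd ⟨z, hz, hzw⟩ h⟩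
  choose c hc_mem hc_cover using recenter
  calc covNum n ε ≤ #(t.image c) := Nat.sInf_le ⟨t.image c, ?_, rfl, fun z hz => ?_⟩
    _ ≤ #t := card_image_le
  · simpa [Set.subset_def] using fun w _ => hc_mem w
  · obtain ⟨w, hw, hzw⟩ := ht z hz
    exact ⟨c w, mem_image_of_mem c hw, by rw [dInfty_eq_dist]; exact hc_cover w z hz hzw⟩

end SupDistance

section ComplexGrid

noncomputable def complexGrid (M : ℕ) (δ : ℝ) : Finset ℂ :=
  (Icc (-(M : ℤ)) M ×ˢ Icc (-(M : ℤ)) M).image fun p => ⟨p.1 * δ, p.2 * δ⟩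

lemma card_complexGrid_le (M : ℕ) (δ : ℝ) : #(complexGrid M δ) ≤ (2 * M + 1) ^ 2 := by
  refine card_image_le.trans_eq ?_
  rw [card_product, Int.card_Icc, sq]
  congr 2 <;> omega

lemma zero_mem_complexGrid (M : ℕ) (δ : ℝ) : 0 ∈ complexGrid M δ :=
  mem_image.2 ⟨(0, 0), by simp, by simp [Complex.ext_iff]⟩

lemma floor_div_mem_Icc {x δ : ℝ} {M : ℕ} (hδ : 0 < δ) (hM : 1 ≤ M * δ) (hx : |x| ≤ 1) :
    ⌊x / δ⌋ ∈ Icc (-(M : ℤ)) M := by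
  obtain ⟨hx₁, hx₂⟩ := abs_le.1 hx
  rw [mem_Icc, Int.le_floor, Int.floor_le_iff]
  push_cast
  constructor
  · rw [le_div_iff₀ hδ]; linarith
  · rw [div_lt_iff₀ hδ]; linarith

lemma exists_mem_complexGrid_norm_sub_le {δ : ℝ} {M : ℕ} (hδ : 0 < δ) (hM : 1 ≤ M * δ) {c : ℂ}
    (hc : ‖c‖ ≤ 1) : ∃ g ∈ complexGrid M δ, ‖c - g‖ ≤ 2 * δ := by
  refine ⟨⟨⌊c.re / δ⌋ * δ, ⌊c.im / δ⌋ * δ⟩, mem_image.2 ⟨(⌊c.re / δ⌋, ⌊c.im / δ⌋), ?_, rfl⟩, ?_⟩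
  · exact mem_product.2 ⟨floor_div_mem_Icc hδ hM ((Complex.abs_re_le_norm c).trans hc),
      floor_div_mem_Icc hδ hM ((Complex.abs_im_le_norm c).trans hc)⟩
  · refine (Complex.norm_le_abs_re_add_abs_im _).trans ?_
    simp only [Complex.sub_re, Complex.sub_im]
    rw [abs_of_nonneg (Int.sub_floor_div_mul_nonneg _ hδ),
      abs_of_nonneg (Int.sub_floor_div_mul_nonneg _ hδ)]
    linarith [Int.sub_floor_div_mul_lt c.re hδ, Int.sub_floor_div_mul_lt c.im hδ]

end ComplexGrid

section CoveringNumber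

variable {n : ℕ}

lemma exists_complexGrid_approx {δ : ℝ} {M : ℕ} (hδ : 0 < δ) (hM : 1 ≤ M * δ)
    {z : Fin n → ℂ} (hz : z ∈ l2Ball n) :
    ∃ w : Fin n → ℂ, (∀ i, w i ∈ complexGrid M δ) ∧ (∀ i, w i ≠ 0 → 2 * δ < ‖z i‖) ∧
      dist z w ≤ 2 * δ := by
  have coord : ∀ i, ∃ g ∈ complexGrid M δ, (g ≠ 0 → 2 * δ < ‖z i‖) ∧ ‖z i - g‖ ≤ 2 * δ := by
    intro i
    by_cases h : 2 * δ < ‖z i‖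
    · obtain ⟨g, hg, hzg⟩ :=
        exists_mem_complexGrid_norm_sub_le hδ hM (norm_le_one_of_mem_l2Ball hz i)
      exact ⟨g, hg, fun _ => h, hzg⟩
    · exact ⟨0, zero_mem_complexGrid M δ, fun h0 => absurd rfl h0, by simpa using not_lt.1 h⟩
  choose w hw_mem hw_supp hw_dist using coord
  exact ⟨w, hw_mem, hw_supp, (dist_pi_le_iff (by positivity)).2 fun i => by
    rw [dist_eq_norm]; exact hw_dist i⟩

lemma covNum_le (hn : 0 < n) {ε : ℝ} (hε : 0 < ε) :
    covNum n ε ≤ (n * (2 * ⌈5 / ε⌉₊ + 1) ^ 2) ^ min n ⌈7 / ε ^ 2⌉₊ := by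
  have : Nonempty (Fin n) := ⟨⟨0, hn⟩⟩
  set δ := ε / 5
  set M := ⌈5 / ε⌉₊
  set k := min n ⌈7 / ε ^ 2⌉₊
  have hδ : 0 < δ := by positivity
  have hM : 1 ≤ M * δ := by
    have := Nat.le_ceil (5 / ε)
    rw [div_le_iff₀ hε] at this
    simp only [δ]
    linarith
  have hcover : ∀ z ∈ l2Ball n, ∃ w ∈ sparseVectors (complexGrid M δ) k, dist z w ≤ 2 * δ := by
    intro z hz
    obtain ⟨w, hw_mem, hw_supp, hzw⟩ := exists_complexGrid_approx hδ hM hz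
    refine ⟨w, ?_, hzw⟩
    simp only [sparseVectors, mem_filter, Fintype.mem_piFinset]
    refine ⟨hw_mem, le_min (card_le_univ _ |>.trans_eq (Fintype.card_fin n)) ?_⟩
    have hsupp : #{i | w i ≠ 0} ≤ #{i | 2 * δ < ‖z i‖} :=
      card_le_card (monotone_filter_right _ fun i _ => hw_supp i)
    have hcheb := card_lt_norm_mul_sq_le hz (by positivity : 0 ≤ 2 * δ)
    have hlarge : (#{i | 2 * δ < ‖z i‖} : ℝ) ≤ 7 / ε ^ 2 := by
      rw [le_div_iff₀ (by positivity)]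
      simp only [δ] at hcheb
      nlinarith
    exact hsupp.trans (Nat.cast_le.1 (hlarge.trans (Nat.le_ceil _)))
  calc covNum n ε ≤ #(sparseVectors (complexGrid M δ) k) :=
        covNum_le_card _ (by simp only [δ]; linarith) hcover
    _ ≤ (Fintype.card (Fin n) * #(complexGrid M δ)) ^ k := card_sparseVectors_le _ _
    _ ≤ (n * (2 * M + 1) ^ 2) ^ k := by
      rw [Fintype.card_fin]
      gcongr
      exact card_complexGrid_le M δ

lemma covNum_le_pow (hn : 0 < n) {ε : ℝ} (hε : 0 < ε) (hε2 : ε ≤ 2) :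
    (covNum n ε : ℝ) ≤ (256 * n / ε ^ 2) ^ min n ⌈7 / ε ^ 2⌉₊ := by
  have hM : 2 * (⌈5 / ε⌉₊ : ℝ) + 1 ≤ 16 / ε := by
    have h := Nat.ceil_lt_add_one (by positivity : 0 ≤ 5 / ε)
    rw [le_div_iff₀ hε]
    have : 5 / ε * ε = 5 := div_mul_cancel₀ 5 hε.ne'
    nlinarith
  calc (covNum n ε : ℝ) ≤ ((n * (2 * ⌈5 / ε⌉₊ + 1) ^ 2) ^ min n ⌈7 / ε ^ 2⌉₊ : ℕ) :=
        Nat.cast_le.2 (covNum_le hn hε)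
    _ ≤ (256 * n / ε ^ 2) ^ min n ⌈7 / ε ^ 2⌉₊ := by
      push_cast
      gcongr
      calc (n : ℝ) * (2 * ⌈5 / ε⌉₊ + 1) ^ 2 ≤ n * (16 / ε) ^ 2 := by gcongr
        _ = 256 * n / ε ^ 2 := by ring

end CoveringNumber

section Entropy

noncomputable def psi2Inv (t : ℝ) : ℝ := √(log (t + 1))

lemma sqrt_add_le_sqrt_add_sqrt {x y : ℝ} (hx : 0 ≤ x) (hy : 0 ≤ y) : √(x + y) ≤ √x + √y :=
  Real.sqrt_le_iff.2 ⟨by positivity, by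
    nlinarith [Real.sq_sqrt hx, Real.sq_sqrt hy, Real.sqrt_nonneg x, Real.sqrt_nonneg y]⟩

lemma inv_sqrt_natCast_le_one {n : ℕ} (hn : 0 < n) : (√(n : ℝ))⁻¹ ≤ 1 :=
  inv_le_one_of_one_le₀ (Real.one_le_sqrt.2 (Nat.one_le_cast.2 hn))

lemma log_256_le_six : log 256 ≤ 6 := by
  rw [show (256 : ℝ) = 2 ^ 8 by norm_num, Real.log_pow]
  push_cast
  linarith [Real.log_two_lt_d9]

lemma psi2Inv_le_of_le_pow {x B : ℝ} {k : ℕ} (hx : 0 ≤ x) (hB : 1 ≤ B) (h : x ≤ B ^ k) :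
    psi2Inv x ≤ √k * √(log B) + 1 := by
  have hlog : log (x + 1) ≤ k * log B + 1 :=
    calc log (x + 1) ≤ log (2 * B ^ k) :=
          log_le_log (by positivity) (by linarith [one_le_pow₀ (n := k) hB])
      _ = log 2 + k * log B := by rw [log_mul two_ne_zero (by positivity), log_pow]
      _ ≤ k * log B + 1 := by linarith [log_two_lt_d9]
  calc psi2Inv x ≤ √(k * log B + 1) := Real.sqrt_le_sqrt hlog
    _ ≤ √(k * log B) + √1 := sqrt_add_le_sqrt_add_sqrt (by positivity [log_nonneg hB]) zero_le_one
    _ = √k * √(log B) + 1 := by rw [Real.sqrt_mul (Nat.cast_nonneg k), Real.sqrt_one]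

variable {n : ℕ}

lemma psi2Inv_covNum_le (hn : 0 < n) {ε : ℝ} (hε : 0 < ε) (hε2 : ε ≤ 2) :
    psi2Inv (covNum n ε) ≤ √(min n ⌈7 / ε ^ 2⌉₊ : ℕ) * √(log (256 * n / ε ^ 2)) + 1 := by
  refine psi2Inv_le_of_le_pow (Nat.cast_nonneg _) ?_ (covNum_le_pow hn hε hε2)
  rw [one_le_div (by positivity)]
  nlinarith [(Nat.one_le_cast (α := ℝ)).2 hn]

lemma psi2Inv_covNum_le_of_le_inv_sqrt (hn : 0 < n) {ε : ℝ} (hε : 0 < ε) (hεn : ε ≤ (√n)⁻¹) :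
    psi2Inv (covNum n ε) ≤ √n * √(2 * log n + 6) + 1 + √(2 * √n / ε) := by
  have hsn : 0 < √(n : ℝ) := Real.sqrt_pos.2 (Nat.cast_pos.2 hn)
  set y := √n * ε
  have hy : 0 < y := by positivity
  have hy1 : y ≤ 1 := by
    have := mul_le_mul_of_nonneg_left hεn hsn.le
    rwa [mul_inv_cancel₀ hsn.ne'] at this
  have hL : 0 ≤ 2 * log n + 6 := by positivity [log_natCast_nonneg n]
  -- `256 n / ε² = 256 n² y⁻²` and `log y⁻¹ ≤ y⁻¹`
  have hlog : log (256 * n / ε ^ 2) ≤ (2 * log n + 6) + 2 / y := by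
    have h256 : 256 * n / ε ^ 2 = 256 * n ^ 2 * (y⁻¹) ^ 2 := by
      simp only [y]; field_simp; rw [Real.sq_sqrt (Nat.cast_nonneg n)]
    rw [h256, log_mul (by positivity) (by positivity), log_mul (by norm_num) (by positivity),
      log_pow, log_pow]
    have := log_le_sub_one_of_pos (inv_pos.2 hy)
    rw [div_eq_mul_inv]
    push_cast
    linarith [log_256_le_six]
  have hk : √(min n ⌈7 / ε ^ 2⌉₊ : ℕ) ≤ √n := Real.sqrt_le_sqrt (by exact_mod_cast min_le_left _ _)
  calc psi2Inv (covNum n ε) ≤ √(min n ⌈7 / ε ^ 2⌉₊ : ℕ) * √(log (256 * n / ε ^ 2)) + 1 :=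
        psi2Inv_covNum_le hn hε (by linarith [inv_sqrt_natCast_le_one hn])
    _ ≤ √n * (√(2 * log n + 6) + √(2 / y)) + 1 := by
      gcongr
      exact (Real.sqrt_le_sqrt hlog).trans (sqrt_add_le_sqrt_add_sqrt hL (by positivity))
    _ = √n * √(2 * log n + 6) + 1 + √(2 * √n / ε) := by
      have : (n : ℝ) * (2 / y) = 2 * √n / ε := by
        simp only [y]
        field_simp
        rw [Real.sq_sqrt (Nat.cast_nonneg n)]
      rw [mul_add, ← Real.sqrt_mul (Nat.cast_nonneg n) (2 / y), this]
      ring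

lemma psi2Inv_covNum_le_of_inv_sqrt_le (hn : 0 < n) {ε : ℝ} (hεn : (√n)⁻¹ ≤ ε) (hε2 : ε ≤ 2) :
    psi2Inv (covNum n ε) ≤ 4 * √(2 * log n + 6) * ε⁻¹ + 1 := by
  have hsn : 0 < √(n : ℝ) := Real.sqrt_pos.2 (Nat.cast_pos.2 hn)
  have hε : 0 < ε := (inv_pos.2 hsn).trans_le hεn
  have hnε : 1 ≤ n * ε ^ 2 := by
    have := (inv_le_iff_one_le_mul₀ hsn).1 hεn
    nlinarith [Real.sq_sqrt (Nat.cast_nonneg (α := ℝ) n)]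
  have hk : √(min n ⌈7 / ε ^ 2⌉₊ : ℕ) ≤ 4 * ε⁻¹ := by
    have hceil : ((min n ⌈7 / ε ^ 2⌉₊ : ℕ) : ℝ) ≤ (4 * ε⁻¹) ^ 2 := by
      have h1 := Nat.ceil_lt_add_one (by positivity : 0 ≤ 7 / ε ^ 2)
      have h2 : (1 : ℝ) ≤ 9 / ε ^ 2 := by rw [le_div_iff₀ (by positivity)]; nlinarith
      calc ((min n ⌈7 / ε ^ 2⌉₊ : ℕ) : ℝ) ≤ ⌈7 / ε ^ 2⌉₊ := by exact_mod_cast min_le_right _ _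
        _ ≤ 7 / ε ^ 2 + 9 / ε ^ 2 := by linarith
        _ = (4 * ε⁻¹) ^ 2 := by field_simp; norm_num
    exact (Real.sqrt_le_left (by positivity)).2 hceil
  have hlog : log (256 * n / ε ^ 2) ≤ 2 * log n + 6 := by
    calc log (256 * n / ε ^ 2) ≤ log (256 * n ^ 2) := by
          refine log_le_log (by positivity) ?_
          rw [div_le_iff₀ (by positivity)]
          nlinarith [(Nat.one_le_cast (α := ℝ)).2 hn]
      _ = log 256 + 2 * log n := by
          rw [log_mul (by norm_num) (by positivity), log_pow]; push_cast; ring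
      _ ≤ 2 * log n + 6 := by linarith [log_256_le_six]
  calc psi2Inv (covNum n ε) ≤ √(min n ⌈7 / ε ^ 2⌉₊ : ℕ) * √(log (256 * n / ε ^ 2)) + 1 :=
        psi2Inv_covNum_le hn hε hε2
    _ ≤ 4 * ε⁻¹ * √(2 * log n + 6) + 1 := by gcongr
    _ = 4 * √(2 * log n + 6) * ε⁻¹ + 1 := by ring

end Entropy

section Integral

open intervalIntegral

variable {n : ℕ}

lemma sqrt_div_eq_mul_rpow (c : ℝ) {x : ℝ} (hx : 0 ≤ x) : √(c / x) = √c * x ^ (-(1 / 2) : ℝ) := by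
  rw [Real.sqrt_div' c hx, Real.rpow_neg hx, ← Real.sqrt_eq_rpow, div_eq_mul_inv]

lemma integral_psi2Inv_covNum_le_of_le_inv_sqrt (hn : 0 < n)
    (hint : IntervalIntegrable (fun ε => psi2Inv (covNum n ε)) volume 0 (√n)⁻¹) :
    ∫ ε in (0 : ℝ)..(√n)⁻¹, psi2Inv (covNum n ε) ≤ √(2 * log n + 6) + 1 + 2 * √2 := by
  have hsn : 0 < √(n : ℝ) := Real.sqrt_pos.2 (Nat.cast_pos.2 hn)
  set a := (√(n : ℝ))⁻¹
  have ha : 0 < a := inv_pos.2 hsn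
  have ha1 : a ≤ 1 := inv_sqrt_natCast_le_one hn
  set A := √n * √(2 * log n + 6) + 1
  have hpow : IntervalIntegrable (fun ε : ℝ => ε ^ (-(1 / 2) : ℝ)) volume 0 a :=
    intervalIntegrable_rpow' (by norm_num)
  calc ∫ ε in (0 : ℝ)..a, psi2Inv (covNum n ε)
      ≤ ∫ ε in (0 : ℝ)..a, (A + √(2 * √n) * ε ^ (-(1 / 2) : ℝ)) := by
        refine integral_mono_on_of_le_Ioo ha.le hint (intervalIntegrable_const.add
          (hpow.const_mul _)) fun ε hε => ?_
        rw [← sqrt_div_eq_mul_rpow _ hε.1.le]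
        exact psi2Inv_covNum_le_of_le_inv_sqrt hn hε.1 hε.2.le
    _ = A * a + √(2 * √n) * (2 * √a) := by
        rw [integral_add intervalIntegrable_const (hpow.const_mul _),
          intervalIntegral.integral_const, intervalIntegral.integral_const_mul,
          integral_rpow (Or.inl (by norm_num)), Real.sqrt_eq_rpow a]
        norm_num
        ring
    _ = √(2 * log n + 6) + a + 2 * √2 := by
        rw [← mul_assoc, mul_comm _ 2, mul_assoc, ← Real.sqrt_mul (by positivity), mul_assoc,
          mul_inv_cancel₀ hsn.ne', mul_one]
        simp only [A, a]
        field_simp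
    _ ≤ √(2 * log n + 6) + 1 + 2 * √2 := by linarith

lemma integral_psi2Inv_covNum_le_of_inv_sqrt_le (hn : 0 < n)
    (hint : IntervalIntegrable (fun ε => psi2Inv (covNum n ε)) volume (√n)⁻¹ 2) :
    ∫ ε in (√n)⁻¹..(2 : ℝ), psi2Inv (covNum n ε) ≤
      4 * √(2 * log n + 6) * (log 2 + log n / 2) + 2 := by
  have hsn : 0 < √(n : ℝ) := Real.sqrt_pos.2 (Nat.cast_pos.2 hn)
  set a := (√(n : ℝ))⁻¹
  have ha : 0 < a := inv_pos.2 hsn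
  have ha2 : a ≤ 2 := by
    linarith [inv_sqrt_natCast_le_one hn]
  set D := 4 * √(2 * log n + 6)
  have hinv : IntervalIntegrable (fun ε : ℝ => ε⁻¹) volume a 2 :=
    intervalIntegrable_inv (fun ε hε => by
      rw [Set.uIcc_of_le ha2] at hε; exact (ha.trans_le hε.1).ne') continuousOn_id
  calc ∫ ε in a..(2 : ℝ), psi2Inv (covNum n ε) ≤ ∫ ε in a..(2 : ℝ), (D * ε⁻¹ + 1) :=
        integral_mono_on ha2 hint ((hinv.const_mul D).add intervalIntegrable_const)
          fun ε hε => psi2Inv_covNum_le_of_inv_sqrt_le hn hε.1 hε.2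
    _ = D * log (2 / a) + (2 - a) := by
        rw [integral_add (hinv.const_mul D) intervalIntegrable_const,
          intervalIntegral.integral_const_mul,
          integral_inv_of_pos ha two_pos, intervalIntegral.integral_const, smul_eq_mul, mul_one]
    _ ≤ D * (log 2 + log n / 2) + 2 := by
        rw [log_div two_ne_zero ha.ne', log_inv, Real.log_sqrt (Nat.cast_nonneg n)]
        linarith

lemma sum_integral_bounds_le_rpow {L : ℝ} (hL : log 2 ≤ L) :
    (√(2 * L + 6) + 1 + 2 * √2) + (4 * √(2 * L + 6) * (log 2 + L / 2) + 2) ≤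
      60 * L ^ (3 / 2 : ℝ) := by
  have hL₀ : 0.69 ≤ L := hL.trans' (by linarith [log_two_gt_d9])
  have hs : 0.8 ≤ √L := Real.le_sqrt_of_sq_le (by linarith)
  have hsL : √L ^ 2 = L := Real.sq_sqrt (by linarith)
  have hpow : L ^ (3 / 2 : ℝ) = √L ^ 3 := by
    rw [Real.sqrt_eq_rpow, ← Real.rpow_natCast, ← Real.rpow_mul (by linarith)]
    norm_num
  have hB : √(2 * L + 6) ≤ 4 * √L := by
    rw [show 4 * √L = √(16 * L) by rw [Real.sqrt_mul (by norm_num)]; norm_num]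
    exact Real.sqrt_le_sqrt (by linarith)
  have h2 : √2 ≤ 1.5 := Real.sqrt_le_iff.2 ⟨by norm_num, by norm_num⟩
  have hlog2 : log 2 ≤ 1 := by linarith [log_two_lt_d9]
  have hfac : 4 * √(2 * L + 6) * (log 2 + L / 2) ≤ 4 * (4 * √L) * (1 + √L ^ 2 / 2) := by
    rw [hsL]
    gcongr
  rw [hpow]
  nlinarith [hs, sq_nonneg (√L - 0.8)]

end Integral

/-- Entropy integral estimate: for the Young function `ψ₂(t) = e^{t²} − 1` (so that
`ψ₂⁻¹(t) = √(log(t+1))`), the unit ball of `ℓ₂ⁿ` with the `ℓ∞` metric satisfies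
`J_{ψ₂}(B_{ℓ₂ⁿ}, ‖·‖_∞) = ∫₀^{diam} ψ₂⁻¹(N(B_{ℓ₂ⁿ},‖·‖_∞;ε)) dε ≤ C log^{3/2} n`
for some constant `C > 0` independent of `n ≥ 2`. -/
theorem entropy_integral_bound :
    ∃ C > 0, ∀ n : ℕ, 2 ≤ n →
      (∫ ε in (0 : ℝ)..diamInfty n, Real.sqrt (Real.log ((covNum n ε : ℝ) + 1))) ≤
        C * Real.log n ^ ((3 : ℝ) / 2) := by
  refine ⟨60, by norm_num, fun n hn => ?_⟩
  have hn₀ : 0 < n := by omega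
  have hlog : log 2 ≤ log n := log_le_log two_pos (by exact_mod_cast hn)
  rw [diamInfty_eq_two hn₀]
  change ∫ ε in (0 : ℝ)..2, psi2Inv (covNum n ε) ≤ _
  by_cases hint : IntervalIntegrable (fun ε => psi2Inv (covNum n ε)) volume 0 2
  · have ha : (√(n : ℝ))⁻¹ ∈ Set.uIcc (0 : ℝ) 2 := by
      rw [Set.uIcc_of_le zero_le_two]
      exact ⟨by positivity, by
        linarith [inv_sqrt_natCast_le_one hn₀]⟩
    have hint₁ := hint.mono_set (Set.uIcc_subset_uIcc Set.left_mem_uIcc ha)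
    have hint₂ := hint.mono_set (Set.uIcc_subset_uIcc ha Set.right_mem_uIcc)
    rw [← intervalIntegral.integral_add_adjacent_intervals hint₁ hint₂]
    exact (add_le_add (integral_psi2Inv_covNum_le_of_le_inv_sqrt hn₀ hint₁)
      (integral_psi2Inv_covNum_le_of_inv_sqrt_le hn₀ hint₂)).trans
      (sum_integral_bounds_le_rpow hlog)
  · rw [intervalIntegral.integral_undef hint]
    exact mul_nonneg (by norm_num) (rpow_nonneg (log_nonneg (by exact_mod_cast hn₀)) _)
end
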